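/- arXiv:2512.03884 — 6 statements merged into one kernel-verified Lean document; each statement's English description precedes it below -/
import Mathlib

section
/- Let α be a badly approximable real number (i.e., there exists C>0 such that ‖qα‖ ≥ C/q for all positive integers q, where ‖x‖ denotes distance to the nearest integer), and let θ > 1 be a real constant. Then for every real δ with 0 < δ ≤ 1/2, the sum over all positive integers m with ‖mα‖ < δ of 1/m^θ is O(δ^θ), with implied constant depending only on α and θ. -/
/-!
If `‖mα‖ < δ` and `‖m'α‖ < δ` with `m < m'`, then `‖(m' - m)α‖ < 2δ`, so bad approximability
forces `m' - m > C / (2δ) =: L`; likewise every such `m` exceeds `L`. Hence each interval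
`[kL, (k+1)L)` contains at most one such `m`, none of them for `k = 0`, and the sum is at most
`∑ₖ (kL)^{-θ} = L^{-θ} ζ(θ) = O(δ^θ)`.
-/

open scoped Real

/-- Distance from a real number to the nearest integer. -/
noncomputable def nd (x : ℝ) : ℝ := |x - round x|

/-- A real number is badly approximable if `‖qα‖ ≥ C/q` for all positive integers `q`. -/
def BadlyApprox (α : ℝ) : Prop := ∃ C > 0, ∀ q : ℕ, 0 < q → C / q ≤ nd (q * α)

lemma nd_sub_le (x y : ℝ) : nd (x - y) ≤ nd x + nd y :=
  calc nd (x - y) ≤ |x - y - ((round x : ℝ) - round y)| := by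
        simpa [nd] using round_le (x - y) (round x - round y)
    _ = |(x - round x) - (y - round y)| := by ring_nf
    _ ≤ nd x + nd y := abs_sub _ _

lemma tsum_one_div_rpow_le_of_separated {S : Set ℕ} {L θ : ℝ} (hL : 0 < L) (hθ : 1 < θ)
    (hlow : ∀ m ∈ S, L ≤ m) (hsep : ∀ m ∈ S, ∀ m' ∈ S, m < m' → L ≤ (m' : ℝ) - m) :
    ∑' m : S, 1 / (m : ℝ) ^ θ ≤ L⁻¹ ^ θ * ∑' k : ℕ, 1 / (k : ℝ) ^ θ := by
  have hζ : Summable fun k : ℕ => 1 / (k : ℝ) ^ θ := Real.summable_one_div_nat_rpow.2 hθ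
  set bin : S → ℕ := fun m => ⌊(m : ℝ) / L⌋₊
  have bin_mul_le (m : S) : (bin m : ℝ) * L ≤ m :=
    (le_div_iff₀ hL).1 (Nat.floor_le (by positivity))
  have lt_bin_succ_mul (m : S) : (m : ℝ) < (bin m + 1) * L :=
    (div_lt_iff₀ hL).1 (Nat.lt_floor_add_one _)
  have one_le_bin (m : S) : 1 ≤ bin m :=
    Nat.le_floor (by simpa [one_le_div hL] using hlow m m.2)
  have bin_injective : Function.Injective bin := by
    have bin_ne_of_lt {a b : S} (hab : (a : ℕ) < b) : bin a ≠ bin b := fun h => by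
      have := hsep a a.2 b b.2 hab
      have := bin_mul_le a
      have := lt_bin_succ_mul b
      rw [h] at *
      linarith
    intro a b h
    rcases lt_trichotomy (a : ℕ) b with hab | hab | hab
    · exact absurd h (bin_ne_of_lt hab)
    · exact Subtype.ext hab
    · exact absurd h.symm (bin_ne_of_lt hab)
  have term_le (m : S) : 1 / (m : ℝ) ^ θ ≤ L⁻¹ ^ θ * (1 / (bin m : ℝ) ^ θ) := by
    have hpos : 0 < (bin m : ℝ) * L := mul_pos (by exact_mod_cast one_le_bin m) hL
    calc 1 / (m : ℝ) ^ θ ≤ 1 / ((bin m : ℝ) * L) ^ θ :=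
          one_div_le_one_div_of_le (by positivity)
            (Real.rpow_le_rpow hpos.le (bin_mul_le m) (by linarith))
      _ = L⁻¹ ^ θ * (1 / (bin m : ℝ) ^ θ) := by
          rw [Real.mul_rpow (Nat.cast_nonneg _) hL.le, Real.inv_rpow hL.le]
          ring
  rw [← tsum_mul_left]
  exact Summable.tsum_le_tsum_of_inj bin bin_injective (fun _ _ => by positivity) term_le
    (hζ.subtype _) (hζ.mul_left _)

section BadlyApproximable

variable {α C : ℝ} (hbad : ∀ q : ℕ, 0 < q → C / q ≤ nd (q * α))
include hbad

lemma div_lt_of_nd_mul_lt {q : ℕ} (hq : 0 < q) {ε : ℝ} (hε : 0 < ε) (h : nd (q * α) < ε) :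
    C / ε < q := by
  have hC : C / q < ε := (hbad q hq).trans_lt h
  rw [div_lt_iff₀ (by positivity)] at hC
  rw [div_lt_iff₀ hε]
  linarith

lemma div_two_mul_lt_sub_of_nd_mul_lt {δ : ℝ} (hδ : 0 < δ) {m m' : ℕ} (hmm' : m < m')
    (hm : nd (m * α) < δ) (hm' : nd (m' * α) < δ) : C / (2 * δ) < (m' : ℝ) - m := by
  have hnd : nd (((m' - m : ℕ) : ℝ) * α) < 2 * δ := by
    rw [Nat.cast_sub hmm'.le, sub_mul]
    linarith [nd_sub_le (m' * α) (m * α)]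
  simpa [Nat.cast_sub hmm'.le] using
    div_lt_of_nd_mul_lt hbad (Nat.sub_pos_of_lt hmm') (by positivity) hnd

end BadlyApproximable

theorem stmt0 (α : ℝ) (hα : BadlyApprox α) (θ : ℝ) (hθ : 1 < θ) :
    ∃ K > 0, ∀ δ : ℝ, 0 < δ → δ ≤ 1 / 2 →
      (∑' m : ℕ, if 0 < m ∧ nd (m * α) < δ then 1 / (m : ℝ) ^ θ else 0) ≤ K * δ ^ θ := by
  obtain ⟨C, hC, hbad⟩ := hα
  have hζ_pos : 0 < ∑' k : ℕ, 1 / (k : ℝ) ^ θ :=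
    (Real.summable_one_div_nat_rpow.2 hθ).tsum_pos (fun _ => by positivity) 1 (by norm_num)
  refine ⟨(2 / C) ^ θ * ∑' k : ℕ, 1 / (k : ℝ) ^ θ, by positivity, fun δ hδ _ => ?_⟩
  set S : Set ℕ := {m | 0 < m ∧ nd (m * α) < δ}
  have hsum : (∑' m : ℕ, if 0 < m ∧ nd (m * α) < δ then 1 / (m : ℝ) ^ θ else 0) =
      ∑' m : S, 1 / (m : ℝ) ^ θ := by
    rw [tsum_subtype S fun m : ℕ => 1 / (m : ℝ) ^ θ]
    simp only [Set.indicator_apply, S, Set.mem_ofPred_eq]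
  have hlow : ∀ m ∈ S, C / (2 * δ) ≤ m := fun m ⟨hm, hmδ⟩ =>
    ((div_le_div_of_nonneg_left hC.le hδ (by linarith)).trans
      (div_lt_of_nd_mul_lt hbad hm hδ hmδ).le)
  have hsep : ∀ m ∈ S, ∀ m' ∈ S, m < m' → C / (2 * δ) ≤ (m' : ℝ) - m :=
    fun m hm m' hm' hmm' => (div_two_mul_lt_sub_of_nd_mul_lt hbad hδ hmm' hm.2 hm'.2).le
  rw [hsum]
  calc ∑' m : S, 1 / (m : ℝ) ^ θ
      ≤ (C / (2 * δ))⁻¹ ^ θ * ∑' k : ℕ, 1 / (k : ℝ) ^ θ :=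
        tsum_one_div_rpow_le_of_separated (by positivity) hθ hlow hsep
    _ = (2 / C) ^ θ * (∑' k : ℕ, 1 / (k : ℝ) ^ θ) * δ ^ θ := by
        rw [inv_div, mul_div_right_comm, Real.mul_rpow (by positivity) hδ.le]
        ring
end

section
/- Let α be a badly approximable real number and θ > 1 a real constant. Then for all integers M ≥ 2, the sum for m = 1 to M of 1/(m^θ ‖mα‖^θ) is bounded above and below by positive constant multiples of log M, with constants depending only on α and θ. -/
/-!
Upper bound: if `m ≠ m'` lie in a dyadic block `[N, 2N)` and `mα - round (mα)`, `m'α - round (m'α)`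
have the same sign, these errors differ by at least `‖(m - m')α‖ ≥ C/|m - m'| > C/N`. Sorting the
values `‖mα‖ ≥ C/(2N)` into buckets of width `C/(2N)`, the `n`-th bucket therefore holds at most two
`m`, each with `m‖mα‖ ≥ nC/4`; so a block contributes at most `2 (4/C)^θ ζ(θ)`, and `[1, M]` is
covered by `O(log M)` blocks.

Lower bound: Dirichlet's theorem gives for every `n` some `q ≤ n` with `q‖qα‖ < 1`, and bad
approximability forces `q > Cn`. Taking `n = A^i` with `A > 1/C` yields distinct `q_i ≤ A^i`, so
`[1, M]` contains about `log_A M` indices whose term is at least `1`.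
-/

open scoped Real

open Finset

lemma nd_nonneg (x : ℝ) : 0 ≤ nd x := abs_nonneg _

lemma nd_sub_le_s2 (u v : ℝ) : nd (u - v) ≤ |(u - round u) - (v - round v)| :=
  (round_le (u - v) (round u - round v)).trans_eq (by push_cast; ring_nf)

lemma Finset.sum_le_mul_tsum_of_card_fiber_le {ι : Type*} {s : Finset ι} {f : ι → ℝ}
    {g : ι → ℕ} {B : ℕ → ℝ} {k : ℕ} (hB : ∀ n, 0 ≤ B n) (hBs : Summable B)
    (hf : ∀ i ∈ s, f i ≤ B (g i)) (hfiber : ∀ n, #{i ∈ s | g i = n} ≤ k) :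
    ∑ i ∈ s, f i ≤ k * ∑' n, B n :=
  calc ∑ i ∈ s, f i ≤ ∑ i ∈ s, B (g i) := sum_le_sum hf
    _ = ∑ n ∈ s.image g, #{i ∈ s | g i = n} • B n := sum_comp B g
    _ ≤ ∑ n ∈ s.image g, k • B n :=
        sum_le_sum fun n _ => nsmul_le_nsmul_left (hB n) (hfiber n)
    _ ≤ k * ∑' n, B n := by
        rw [← smul_sum, nsmul_eq_mul]
        exact mul_le_mul_of_nonneg_left (hBs.sum_le_tsum _ fun n _ => hB n) k.cast_nonneg

lemma abs_sub_eq_abs_sub_abs_of_sign {a b : ℝ} (h : 0 ≤ a ↔ 0 ≤ b) :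
    |a - b| = |(|a| - |b|)| := by
  rcases le_or_gt 0 a with ha | ha
  · rw [abs_of_nonneg ha, abs_of_nonneg (h.mp ha)]
  · have hb : b < 0 := not_le.mp fun hb => (not_le.mpr ha) (h.mpr hb)
    rw [abs_of_neg ha, abs_of_neg hb, neg_sub_neg, abs_sub_comm]

lemma card_filter_ceil_abs_div_eq_le_two {ι : Type*} {s : Finset ι} {e : ι → ℝ} {w : ℝ}
    (hw : 0 < w)
    (hsep : ∀ i ∈ s, ∀ j ∈ s, i ≠ j → (0 ≤ e i ↔ 0 ≤ e j) → w ≤ |e i - e j|) (n : ℕ) :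
    #{i ∈ s | ⌈|e i| / w⌉₊ = n} ≤ 2 := by
  by_contra! hcard
  obtain ⟨i, hi, j, hj, hij, hsign⟩ := exists_ne_map_eq_of_card_lt_of_maps_to
    (t := (univ : Finset Bool)) (f := fun i => decide (0 ≤ e i)) hcard fun _ _ => mem_univ _
  simp only [mem_filter] at hi hj
  have bucket : ∀ x : ℝ, 0 ≤ x → ⌈x / w⌉₊ = n → (n - 1) * w < x ∧ x ≤ n * w := by
    intro x hx hxn
    have hlo := Nat.ceil_lt_add_one (div_nonneg hx hw.le)
    have hhi := Nat.le_ceil (x / w)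
    rw [hxn] at hlo hhi
    constructor
    · exact (lt_div_iff₀ hw).mp (by linarith)
    · rwa [div_le_iff₀ hw] at hhi
  obtain ⟨hilo, hihi⟩ := bucket _ (abs_nonneg _) hi.2
  obtain ⟨hjlo, hjhi⟩ := bucket _ (abs_nonneg _) hj.2
  have hclose : |e i - e j| < w := by
    rw [abs_sub_eq_abs_sub_abs_of_sign (by simpa using hsign), abs_lt]
    constructor <;> linarith
  exact (hsep i hi.1 j hj.1 hij (by simpa using hsign)).not_gt hclose

lemma summable_one_div_nat_mul_rpow {c θ : ℝ} (hc : 0 < c) (hθ : 1 < θ) :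
    Summable fun n : ℕ => 1 / ((n : ℝ) * c) ^ θ :=
  ((Real.summable_one_div_nat_rpow.mpr hθ).mul_left (1 / c ^ θ)).congr fun n => by
    rw [Real.mul_rpow n.cast_nonneg hc.le, one_div_mul_one_div, mul_comm]

lemma sum_Ico_one_two_pow_le {f : ℕ → ℝ} {K : ℝ}
    (h : ∀ N, 0 < N → ∑ m ∈ Ico N (2 * N), f m ≤ K) (L : ℕ) :
    ∑ m ∈ Ico 1 (2 ^ L), f m ≤ L * K := by
  induction L with
  | zero => simp
  | succ L ih =>
    rw [← sum_Ico_consecutive f Nat.one_le_two_pow (Nat.pow_le_pow_right two_pos L.le_succ),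
      pow_succ', Nat.cast_succ, add_mul, one_mul]
    exact add_le_add ih (h _ (by positivity))

lemma natLog_add_one_le_sum_Icc {f : ℕ → ℝ} {q : ℕ → ℕ} {A M : ℕ} (hf : ∀ m, 0 ≤ f m)
    (hq : StrictMono q) (hq_pos : ∀ i, 0 < q i) (hqA : ∀ i, q i ≤ A ^ i) (hfq : ∀ i, 1 ≤ f (q i))
    (hM : M ≠ 0) : (Nat.log A M + 1 : ℕ) ≤ ∑ m ∈ Icc 1 M, f m := by
  set T := Nat.log A M + 1
  have hA : 0 < A := Nat.pos_of_ne_zero fun hA => by simpa [hA] using (hq_pos 1).trans_le (hqA 1)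
  have hsub : (range T).image q ⊆ Icc 1 M := by
    simp only [subset_iff, mem_image, mem_range, mem_Icc]
    rintro _ ⟨i, hi, rfl⟩
    exact ⟨hq_pos i, (hqA i).trans ((Nat.pow_le_pow_right hA (by omega)).trans
      (Nat.pow_log_le_self A hM))⟩
  calc (T : ℝ) = ∑ i ∈ range T, (1 : ℝ) := by simp
    _ ≤ ∑ i ∈ range T, f (q i) := sum_le_sum fun i _ => hfq i
    _ = ∑ m ∈ (range T).image q, f m := (sum_image hq.injective.injOn).symm
    _ ≤ ∑ m ∈ Icc 1 M, f m := sum_le_sum_of_subset_of_nonneg hsub fun m _ _ => hf m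

noncomputable def ndTerm (α θ : ℝ) (m : ℕ) : ℝ := 1 / ((m : ℝ) ^ θ * nd (m * α) ^ θ)

section ndTerm

variable {α θ : ℝ} {m : ℕ}

lemma ndTerm_eq : ndTerm α θ m = 1 / ((m : ℝ) * nd (m * α)) ^ θ := by
  rw [ndTerm, Real.mul_rpow m.cast_nonneg (nd_nonneg _)]

lemma ndTerm_nonneg : 0 ≤ ndTerm α θ m := by
  rw [ndTerm_eq]
  exact div_nonneg zero_le_one (Real.rpow_nonneg (mul_nonneg m.cast_nonneg (nd_nonneg _)) _)

lemma ndTerm_le_of_le {b : ℝ} (hθ : 0 ≤ θ) (hb : 0 < b) (h : b ≤ m * nd (m * α)) :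
    ndTerm α θ m ≤ 1 / b ^ θ := by
  rw [ndTerm_eq]
  exact one_div_le_one_div_of_le (Real.rpow_pos_of_pos hb θ) (Real.rpow_le_rpow hb.le h hθ)

lemma one_le_ndTerm (hθ : 0 ≤ θ) (hpos : 0 < m * nd (m * α)) (h : m * nd (m * α) ≤ 1) :
    1 ≤ ndTerm α θ m := by
  rw [ndTerm_eq, le_div_iff₀ (Real.rpow_pos_of_pos hpos θ), one_mul]
  exact Real.rpow_le_one hpos.le h hθ

end ndTerm

def BadlyApproxWith (α C : ℝ) : Prop := ∀ q : ℕ, 0 < q → C / q ≤ nd (q * α)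

namespace BadlyApproxWith

variable {α C θ : ℝ}

lemma div_lt_abs_sub (h : BadlyApproxWith α C) (hC : 0 < C) {x y N : ℕ} (hyx : y < x)
    (hxN : x < y + N) :
    C / N < |(x * α - round (x * α)) - (y * α - round (y * α))| :=
  calc C / N < C / (x - y : ℕ) :=
        div_lt_div_of_pos_left hC (by exact_mod_cast Nat.sub_pos_of_lt hyx) (by norm_cast; omega)
    _ ≤ nd ((x - y : ℕ) * α) := h _ (Nat.sub_pos_of_lt hyx)
    _ = nd (x * α - y * α) := by rw [Nat.cast_sub hyx.le, sub_mul]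
    _ ≤ _ := nd_sub_le_s2 _ _

lemma sum_Ico_ndTerm_le (h : BadlyApproxWith α C) (hC : 0 < C) (hθ : 1 < θ) {N : ℕ}
    (hN : 0 < N) :
    ∑ m ∈ Ico N (2 * N), ndTerm α θ m ≤ 2 * ∑' n : ℕ, 1 / ((n : ℝ) * (C / 4)) ^ θ := by
  set w := C / (2 * N) with hw_def
  have hNpos : (0 : ℝ) < N := by exact_mod_cast hN
  have hw : 0 < w := by positivity
  have hw_le : ∀ m ∈ Ico N (2 * N), w ≤ nd (m * α) := fun m hm => by
    rw [mem_Ico] at hm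
    calc w ≤ C / m := div_le_div_of_nonneg_left hC.le (by exact_mod_cast hN.trans_le hm.1)
          (by exact_mod_cast hm.2.le)
      _ ≤ nd (m * α) := h m (hN.trans_le hm.1)
  refine (sum_le_mul_tsum_of_card_fiber_le (s := Ico N (2 * N)) (f := ndTerm α θ) (k := 2)
    (g := fun m => ⌈nd (m * α) / w⌉₊)
    (B := fun n => 1 / ((n : ℝ) * (C / 4)) ^ θ) (fun n => by positivity)
    (summable_one_div_nat_mul_rpow (by positivity) hθ) ?_ ?_).trans_eq (by rw [Nat.cast_ofNat])
  · intro m hm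
    have hr : 1 ≤ nd (m * α) / w := (one_le_div hw).mpr (hw_le m hm)
    have hceil := Nat.ceil_lt_add_one (zero_le_one.trans hr)
    have hmN : (N : ℝ) ≤ m := by exact_mod_cast (mem_Ico.mp hm).1
    apply ndTerm_le_of_le (by linarith) (mul_pos (by positivity) (by positivity))
    calc (⌈nd (m * α) / w⌉₊ : ℝ) * (C / 4) ≤ 2 * (nd (m * α) / w) * (C / 4) := by
          gcongr; linarith
      _ = N * nd (m * α) := by rw [hw_def]; field_simp; ring
      _ ≤ m * nd (m * α) := by gcongr; exact nd_nonneg _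
  · intro n
    refine card_filter_ceil_abs_div_eq_le_two (e := fun m : ℕ => m * α - round (m * α)) hw
      (fun x hx y hy hxy _ => ?_) n
    have hwN : w ≤ C / N := by
      rw [hw_def]; exact div_le_div_of_nonneg_left hC.le hNpos (by linarith)
    rw [mem_Ico] at hx hy
    rcases hxy.lt_or_gt with hlt | hlt
    · rw [abs_sub_comm]
      exact hwN.trans (h.div_lt_abs_sub hC hlt (by omega)).le
    · exact hwN.trans (h.div_lt_abs_sub hC hlt (by omega)).le

lemma exists_sum_ndTerm_le_mul_log (h : BadlyApproxWith α C) (hC : 0 < C) (hθ : 1 < θ) :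
    ∃ K > 0, ∀ M : ℕ, 2 ≤ M → ∑ m ∈ Icc 1 M, ndTerm α θ m ≤ K * Real.log M := by
  set K₀ := 2 * ∑' n : ℕ, 1 / ((n : ℝ) * (C / 4)) ^ θ
  have hK₀ : 0 < K₀ := mul_pos two_pos <|
    (summable_one_div_nat_mul_rpow (by positivity) hθ).tsum_pos (fun n => by positivity) 1
      (by norm_num; positivity)
  have hlog2 : 0 < Real.log 2 := Real.log_pos one_lt_two
  refine ⟨2 * K₀ / Real.log 2, by positivity, fun M hM => ?_⟩
  set J := Nat.log 2 M
  have hJ : (1 : ℝ) ≤ J := by exact_mod_cast Nat.log_pos one_lt_two hM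
  have hJlog : J * Real.log 2 ≤ Real.log M := by
    rw [← Real.log_pow]
    exact Real.log_le_log (by positivity) (by exact_mod_cast Nat.pow_log_le_self 2 (by omega))
  calc ∑ m ∈ Icc 1 M, ndTerm α θ m ≤ ∑ m ∈ Ico 1 (2 ^ (J + 1)), ndTerm α θ m :=
        sum_le_sum_of_subset_of_nonneg
          (fun m hm => by
            rw [mem_Icc] at hm
            exact mem_Ico.mpr ⟨hm.1, hm.2.trans_lt (Nat.lt_pow_succ_log_self one_lt_two M)⟩)
          (fun _ _ _ => ndTerm_nonneg)
    _ ≤ (J + 1 : ℕ) * K₀ := sum_Ico_one_two_pow_le (fun N hN => h.sum_Ico_ndTerm_le hC hθ hN) _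
    _ ≤ 2 * J * K₀ := by push_cast; gcongr; linarith
    _ = 2 * K₀ / Real.log 2 * (J * Real.log 2) := by field_simp
    _ ≤ 2 * K₀ / Real.log 2 * Real.log M := by gcongr

lemma exists_one_le_ndTerm (h : BadlyApproxWith α C) (hC : 0 < C) (hθ : 0 ≤ θ) {n : ℕ}
    (hn : 0 < n) : ∃ q : ℕ, C * n < q ∧ q ≤ n ∧ 1 ≤ ndTerm α θ q := by
  obtain ⟨q, hq0, hqn, hq⟩ := Real.exists_nat_abs_mul_sub_round_le α hn
  replace hq : nd (q * α) ≤ 1 / (n + 1) := hq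
  have hqpos : (0 : ℝ) < q := by exact_mod_cast hq0
  have hCq := h q hq0
  refine ⟨q, ?_, hqn, one_le_ndTerm hθ (mul_pos hqpos (lt_of_lt_of_le (by positivity) hCq)) ?_⟩
  · have := hCq.trans hq
    rw [div_le_div_iff₀ hqpos (by positivity)] at this
    linarith
  · calc (q : ℝ) * nd (q * α) ≤ n * (1 / (n + 1)) :=
          mul_le_mul (by exact_mod_cast hqn) hq (nd_nonneg _) n.cast_nonneg
      _ ≤ 1 := by rw [mul_one_div, div_le_one (by positivity)]; linarith

lemma exists_mul_log_le_sum_ndTerm (h : BadlyApproxWith α C) (hC : 0 < C) (hθ : 0 ≤ θ) :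
    ∃ k > 0, ∀ M : ℕ, 2 ≤ M → k * Real.log M ≤ ∑ m ∈ Icc 1 M, ndTerm α θ m := by
  obtain ⟨A, hA⟩ := exists_nat_gt (max 1 C⁻¹)
  rw [max_lt_iff] at hA
  have hA1 : 1 < A := by exact_mod_cast hA.1
  have hCA : 1 < C * A := by rw [mul_comm]; exact (inv_lt_iff_one_lt_mul₀ hC).mp hA.2
  choose q hqlo hqhi hq1 using fun i : ℕ =>
    h.exists_one_le_ndTerm hC hθ (pow_pos (by omega : 0 < A) i)
  push_cast at hqlo
  have hq_pos (i : ℕ) : 0 < q i := by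
    exact_mod_cast (by positivity : 0 < C * A ^ i).trans (hqlo i)
  have hq_mono : StrictMono q := strictMono_nat_of_lt_succ fun i => by
    have hApos : (0 : ℝ) < A ^ i := by positivity
    have : (q i : ℝ) < q (i + 1) :=
      calc (q i : ℝ) ≤ A ^ i := by exact_mod_cast hqhi i
        _ < C * A ^ (i + 1) := by rw [pow_succ]; nlinarith
        _ < q (i + 1) := hqlo (i + 1)
    exact_mod_cast this
  have hlogA : 0 < Real.log A := Real.log_pos (by exact_mod_cast hA1)
  refine ⟨1 / Real.log A, by positivity, fun M hM => ?_⟩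
  set T := Nat.log A M + 1
  have hlogM : Real.log M ≤ T * Real.log A := by
    rw [← Real.log_pow]
    exact Real.log_le_log (by positivity) (by exact_mod_cast (Nat.lt_pow_succ_log_self hA1 M).le)
  calc 1 / Real.log A * Real.log M ≤ 1 / Real.log A * (T * Real.log A) := by gcongr
    _ = T := by field_simp
    _ ≤ _ := natLog_add_one_le_sum_Icc (f := ndTerm α θ) (fun _ => ndTerm_nonneg) hq_mono hq_pos
        hqhi hq1 (by omega)

end BadlyApproxWith

theorem stmt2 (α : ℝ) (hα : BadlyApprox α) (θ : ℝ) (hθ : 1 < θ) :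
    ∃ k > 0, ∃ K > 0, ∀ M : ℕ, 2 ≤ M →
      k * Real.log M ≤ (∑ m ∈ Finset.Icc 1 M, 1 / ((m : ℝ) ^ θ * nd (m * α) ^ θ)) ∧
      (∑ m ∈ Finset.Icc 1 M, 1 / ((m : ℝ) ^ θ * nd (m * α) ^ θ)) ≤ K * Real.log M := by
  obtain ⟨C, hC, h : BadlyApproxWith α C⟩ := hα
  obtain ⟨k, hk, hlower⟩ := h.exists_mul_log_le_sum_ndTerm (θ := θ) hC (by linarith)
  obtain ⟨K, hK, hupper⟩ := h.exists_sum_ndTerm_le_mul_log hC hθ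
  exact ⟨k, hk, K, hK, fun M hM => ⟨hlower M hM, hupper M hM⟩⟩
end

section
/- Let X be a nondegenerate integer-valued random variable (its support has at least two elements) with characteristic function φ(x) = E(e^{ixX}), and let L = gcd of the support of X. Then |1 − φ(2πx)| ≫ ‖Lx‖² uniformly in x ∈ ℝ, where ‖·‖ is the distance to the nearest integer. -/
open scoped Real
open MeasureTheory

/-!
If `n` carries mass `p > 0`, then `Re (1 - φ (2πx)) = E (1 - cos (2πxX)) ≥ p (1 - cos (2πnx)) ≥ 8p‖nx‖²`.
Since `‖(a + b)x‖² ≤ 2 (‖ax‖² + ‖bx‖²)`, the integers `n` with `‖nx‖² ≪ |1 - φ (2πx)|` uniformly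
in `x` form an additive subgroup of `ℤ`. It contains the support of `X`, hence the subgroup the
support generates, and that subgroup contains `L`.
-/

open Asymptotics Complex

lemma nd_eq_norm_unitAddCircle (x : ℝ) : nd x = ‖(x : UnitAddCircle)‖ :=
  UnitAddCircle.norm_eq.symm

lemma nd_neg (x : ℝ) : nd (-x) = nd x := by
  simp only [nd_eq_norm_unitAddCircle, QuotientAddGroup.mk_neg, norm_neg]

lemma nd_add_le (x y : ℝ) : nd (x + y) ≤ nd x + nd y := by
  simp only [nd_eq_norm_unitAddCircle, QuotientAddGroup.mk_add]
  exact norm_add_le _ _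

lemma nd_add_sq_le (x y : ℝ) : nd (x + y) ^ 2 ≤ 2 * (nd x ^ 2 + nd y ^ 2) := by
  have hxy := nd_add_le x y
  have h0 : 0 ≤ nd (x + y) := abs_nonneg _
  nlinarith [sq_nonneg (nd x - nd y)]

lemma eight_mul_nd_sq_le_one_sub_cos (θ : ℝ) : 8 * nd θ ^ 2 ≤ 1 - Real.cos (2 * π * θ) := by
  set r := θ - round θ with hr
  have hcos : Real.cos (2 * π * θ) = Real.cos (2 * π * r) := by
    rw [show 2 * π * r = 2 * π * θ - (round θ : ℤ) * (2 * π) by ring,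
      Real.cos_sub_int_mul_two_pi]
  have hr_le : |2 * π * r| ≤ π := by
    rw [abs_mul, abs_of_pos Real.two_pi_pos]
    nlinarith [abs_sub_round θ, Real.pi_pos]
  -- Jordan's inequality: `cos y ≤ 1 - 2y²/π²` on `[-π, π]`, taken at `y = 2π‖θ‖`.
  have := Real.cos_le_one_sub_mul_cos_sq hr_le
  rw [hcos, nd, ← hr, sq_abs]
  field_simp at this
  nlinarith [Real.pi_pos]

def ndSqDominated {F : Type*} [Norm F] (g : ℝ → F) : AddSubgroup ℤ where
  carrier := {n | (fun x => nd (n * x) ^ 2) =O[⊤] g}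
  zero_mem' := by simpa [nd] using isBigO_zero (E' := ℝ) g ⊤
  add_mem' {a b} ha hb := by
    have hsum : (fun x : ℝ => nd (a * x) ^ 2 + nd (b * x) ^ 2) =O[⊤] g := IsBigO.add ha hb
    refine (IsBigO.of_bound 2 (Filter.Eventually.of_forall fun x => ?_)).trans hsum
    rw [Real.norm_of_nonneg (by positivity), Real.norm_of_nonneg (by positivity)]
    simpa [add_mul] using nd_add_sq_le (a * x) (b * x)
  neg_mem' {a} ha := by simpa [neg_mul, nd_neg] using ha

lemma Int.natCast_mem_closure_of_forall_dvd {S : Set ℤ} {L : ℕ}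
    (hL : ∀ M : ℕ, (∀ n ∈ S, (M : ℤ) ∣ n) → M ∣ L) : (L : ℤ) ∈ AddSubgroup.closure S := by
  obtain ⟨g, hg⟩ := Int.subgroup_cyclic (AddSubgroup.closure S)
  rw [← AddSubgroup.zmultiples_eq_closure, ← Int.zmultiples_natAbs] at hg
  rw [hg, Int.mem_zmultiples_iff]
  refine Int.natCast_dvd_natCast.2 (hL _ fun n hn => ?_)
  rw [← Int.mem_zmultiples_iff, ← hg]
  exact AddSubgroup.subset_closure hn

section Probability

variable {Ω : Type*} [MeasurableSpace Ω] {μ : Measure Ω}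

lemma measureReal_preimage_singleton_mul_le_integral {α : Type*} [MeasurableSpace α]
    [MeasurableSingletonClass α] {X : Ω → α} (hX : Measurable X) {f : α → ℝ} (hf : 0 ≤ f)
    (hfX : Integrable (fun ω => f (X ω)) μ) (a : α) :
    μ.real (X ⁻¹' {a}) * f a ≤ ∫ ω, f (X ω) ∂μ :=
  calc μ.real (X ⁻¹' {a}) * f a = ∫ ω in X ⁻¹' {a}, f (X ω) ∂μ := by
        rw [setIntegral_congr_fun (hX (measurableSet_singleton a)) fun ω hω => by rw [hω],
          setIntegral_const, smul_eq_mul]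
    _ ≤ ∫ ω, f (X ω) ∂μ := setIntegral_le_integral hfX (ae_of_all _ fun ω => hf _)

variable [IsProbabilityMeasure μ]

lemma re_one_sub_integral_exp {X : Ω → ℝ} (hX : Measurable X) (t : ℝ) :
    (1 - ∫ ω, exp (I * t * X ω) ∂μ).re = ∫ ω, (1 - Real.cos (t * X ω)) ∂μ := by
  have hexp : ∀ ω, exp (I * t * X ω) = exp (↑(t * X ω) * I) := fun ω => by
    push_cast; ring_nf
  have hint : Integrable (fun ω => exp (I * t * X ω)) μ :=
    .of_bound (by fun_prop) 1 (ae_of_all _ fun ω => by rw [hexp, norm_exp_ofReal_mul_I])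
  have hcos : Integrable (fun ω => Real.cos (t * X ω)) μ :=
    .of_bound (by fun_prop) 1 (ae_of_all _ fun ω => Real.abs_cos_le_one _)
  rw [sub_re, one_re, ← RCLike.re_to_complex, ← integral_re hint,
    integral_sub (integrable_const 1) hcos]
  simp only [RCLike.re_to_complex, hexp, exp_ofReal_mul_I_re]
  simp

lemma mul_nd_sq_le_re_one_sub_integral_exp {X : Ω → ℤ} (hX : Measurable X) (n : ℤ) (x : ℝ) :
    8 * μ.real (X ⁻¹' {n}) * nd (n * x) ^ 2 ≤
      (1 - ∫ ω, exp (I * ↑(2 * π * x) * (X ω : ℂ)) ∂μ).re := by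
  have hre := re_one_sub_integral_exp (μ := μ)
    (by fun_prop : Measurable fun ω => (X ω : ℝ)) (2 * π * x)
  simp only [ofReal_intCast] at hre
  rw [hre]
  have hf : 0 ≤ fun m : ℤ => 1 - Real.cos (2 * π * x * m) :=
    fun m => sub_nonneg.2 (Real.cos_le_one _)
  have hfX : Integrable (fun ω => 1 - Real.cos (2 * π * x * X ω)) μ :=
    .of_bound (by fun_prop) 2 (ae_of_all _ fun ω => by
      rw [Real.norm_eq_abs, abs_le]
      constructor <;> linarith [Real.neg_one_le_cos (2 * π * x * X ω),
        Real.cos_le_one (2 * π * x * X ω)])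
  calc 8 * μ.real (X ⁻¹' {n}) * nd (n * x) ^ 2
      = μ.real (X ⁻¹' {n}) * (8 * nd (n * x) ^ 2) := by ring
    _ ≤ μ.real (X ⁻¹' {n}) * (1 - Real.cos (2 * π * x * n)) := by
        gcongr
        have := eight_mul_nd_sq_le_one_sub_cos (n * x)
        rwa [show 2 * π * (n * x) = 2 * π * x * n by ring] at this
    _ ≤ _ := measureReal_preimage_singleton_mul_le_integral hX hf hfX n

end Probability

theorem stmt5_general {Ω : Type*} [MeasurableSpace Ω] (μ : Measure Ω) [IsProbabilityMeasure μ]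
    (X : Ω → ℤ) (hX : Measurable X)
    (L : ℕ)
    (hLmax : ∀ M : ℕ, (∀ n : ℤ, 0 < μ (X ⁻¹' {n}) → (M : ℤ) ∣ n) → M ∣ L)
    (φ : ℝ → ℂ) (hφ : ∀ t : ℝ, φ t = ∫ ω, Complex.exp (Complex.I * t * (X ω : ℂ)) ∂μ) :
    ∃ c > 0, ∀ x : ℝ, c * nd (L * x) ^ 2 ≤ ‖1 - φ (2 * π * x)‖ := by
  have hsupp : AddSubgroup.closure {n : ℤ | 0 < μ (X ⁻¹' {n})} ≤
      ndSqDominated fun x => 1 - φ (2 * π * x) := by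
    refine (AddSubgroup.closure_le _).2 fun n hn => ?_
    have hp : 0 < μ.real (X ⁻¹' {n}) := ENNReal.toReal_pos hn.ne' (measure_ne_top μ _)
    refine IsBigO.of_bound (8 * μ.real (X ⁻¹' {n}))⁻¹ (Filter.Eventually.of_forall fun x => ?_)
    rw [Real.norm_of_nonneg (by positivity), hφ, le_inv_mul_iff₀ (by positivity)]
    exact (mul_nd_sq_le_re_one_sub_integral_exp hX n x).trans (re_le_norm _)
  obtain ⟨C, hC, hbound⟩ :=
    (hsupp (Int.natCast_mem_closure_of_forall_dvd hLmax)).exists_pos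
  refine ⟨C⁻¹, inv_pos.2 hC, fun x => ?_⟩
  have hx := isBigOWith_top.1 hbound x
  rw [Real.norm_of_nonneg (by positivity), Int.cast_natCast] at hx
  rwa [inv_mul_le_iff₀ hC]

theorem stmt5 {Ω : Type*} [MeasurableSpace Ω] (μ : Measure Ω) [IsProbabilityMeasure μ]
    (X : Ω → ℤ) (hX : Measurable X)
    (hnondeg : ¬ ∃ n : ℤ, ∀ᵐ ω ∂μ, X ω = n)
    (L : ℕ)
    (hLdvd : ∀ n : ℤ, 0 < μ (X ⁻¹' {n}) → (L : ℤ) ∣ n)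
    (hLmax : ∀ M : ℕ, (∀ n : ℤ, 0 < μ (X ⁻¹' {n}) → (M : ℤ) ∣ n) → M ∣ L)
    (φ : ℝ → ℂ) (hφ : ∀ t : ℝ, φ t = ∫ ω, Complex.exp (Complex.I * t * (X ω : ℂ)) ∂μ) :
    ∃ c > 0, ∀ x : ℝ, c * nd (L * x) ^ 2 ≤ ‖1 - φ (2 * π * x)‖ :=
  stmt5_general μ X hX L hLmax φ hφ
end

section
/- Let Q(x,y) = ax² + bxy + cy² with gcd(a,b,c) = 1 and nonsquare discriminant D > 0, and let ε > 1 be as above. Define the set of primary representations P_Q = {(x,y) ∈ ℤ² : 2ax + (b−√D)y > 0 and 1 ≤ |(2ax + (b+√D)y)/(2ax + (b−√D)y)| < ε²}. Then for every nonzero integer n, each Aut(Q)-orbit in Q⁻¹(n) intersects P_Q in exactly one point; in particular R_Q(n) = |Q⁻¹(n) ∩ P_Q|. -/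
/-- The binary quadratic form `Q(x,y) = a x² + b x y + c y²` acting on vectors in `ℤ²`. -/
def qf (a b c : ℤ) (v : Fin 2 → ℤ) : ℤ := a * v 0 ^ 2 + b * (v 0 * v 1) + c * v 1 ^ 2

/-- Two vectors are related if an automorph of `Q` maps one to the other. -/
def relV (a b c : ℤ) (v w : Fin 2 → ℤ) : Prop :=
  ∃ B : Matrix (Fin 2) (Fin 2) ℤ, B.det = 1 ∧ (∀ u, qf a b c (B.mulVec u) = qf a b c u) ∧
    B.mulVec v = w

/-- The restriction of the orbit relation to the representations of `n`. -/
def orbRel (a b c : ℤ) (n : ℤ) (v w : {v : Fin 2 → ℤ // qf a b c v = n}) : Prop :=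
  relV a b c v.1 w.1

/-- `R_Q(n)`: the number of orbits of `Aut(Q)` on the set of representations of `n`. -/
noncomputable def RQ (a b c : ℤ) (n : ℤ) : ℕ := Nat.card (Quot (orbRel a b c n))

/-- The set of primary representations `P_Q`. -/
def PQ (a b : ℤ) (D : ℤ) (ε : ℝ) : Set (Fin 2 → ℤ) :=
  {v | 0 < 2 * a * (v 0 : ℝ) + ((b : ℝ) - Real.sqrt D) * v 1 ∧
    1 ≤ |(2 * a * (v 0 : ℝ) + ((b : ℝ) + Real.sqrt D) * v 1) /
          (2 * a * (v 0 : ℝ) + ((b : ℝ) - Real.sqrt D) * v 1)| ∧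
    |(2 * a * (v 0 : ℝ) + ((b : ℝ) + Real.sqrt D) * v 1) /
          (2 * a * (v 0 : ℝ) + ((b : ℝ) - Real.sqrt D) * v 1)| < ε ^ 2}

def Mval (a b : ℤ) (s : ℝ) (v : Fin 2 → ℤ) : ℝ := 2 * a * (v 0 : ℝ) + ((b : ℝ) - s) * v 1

def Lval (a b : ℤ) (s : ℝ) (v : Fin 2 → ℤ) : ℝ := 2 * a * (v 0 : ℝ) + ((b : ℝ) + s) * v 1

lemma mem_PQ_iff (a b D : ℤ) (ε : ℝ) (v : Fin 2 → ℤ) :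
    v ∈ PQ a b D ε ↔ (0 < Mval a b (Real.sqrt D) v ∧
      1 ≤ |Lval a b (Real.sqrt D) v / Mval a b (Real.sqrt D) v| ∧
      |Lval a b (Real.sqrt D) v / Mval a b (Real.sqrt D) v| < ε ^ 2) := Iff.rfl

lemma LMprod (a b c D : ℤ) (hD : D = b ^ 2 - 4 * a * c) (s : ℝ) (hs : s ^ 2 = (D : ℝ))
    (v : Fin 2 → ℤ) :
    Lval a b s v * Mval a b s v = 4 * (a : ℝ) * ((qf a b c v : ℤ) : ℝ) := by
  have hDr : (D : ℝ) = (b : ℝ) ^ 2 - 4 * a * c := by exact_mod_cast congrArg (Int.cast : ℤ → ℝ) hD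
  simp only [Lval, Mval, qf]
  push_cast
  linear_combination (-((v 1 : ℝ) ^ 2)) * hDr + (-((v 1 : ℝ) ^ 2)) * hs

lemma mulVec2 (B : Matrix (Fin 2) (Fin 2) ℤ) (v : Fin 2 → ℤ) :
    B.mulVec v = ![B 0 0 * v 0 + B 0 1 * v 1, B 1 0 * v 0 + B 1 1 * v 1] := by
  funext i; fin_cases i <;>
    simp [Matrix.mulVec, dotProduct, Fin.sum_univ_two]

lemma qf_pair (a b c x y : ℤ) : qf a b c ![x, y] = a * x ^ 2 + b * (x * y) + c * y ^ 2 := by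
  simp [qf]

lemma aux_parity (D t u : ℤ) (h : t ^ 2 - D * u ^ 2 = 4) : Even t ↔ Even D ∨ Even u := by
  have h2 : t ^ 2 = 4 + D * u ^ 2 := by linarith
  rw [← Int.even_pow' (by norm_num : 2 ≠ 0), h2]
  have h4 : Even (4:ℤ) := ⟨2, rfl⟩
  rw [Int.even_add, Int.even_mul, Int.even_pow]
  norm_num

lemma aux_sol_mul (D t u t' u' : ℤ) (h1 : t ^ 2 - D * u ^ 2 = 4) (h2 : t' ^ 2 - D * u' ^ 2 = 4) :
    ∃ T U : ℤ, T ^ 2 - D * U ^ 2 = 4 ∧ 2 * T = t * t' + D * (u * u') ∧ 2 * U = t * u' + t' * u := by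
  have e1 := aux_parity D t u h1
  have e2 := aux_parity D t' u' h2
  have d1 : Even (t * t' + D * (u * u')) := by
    rw [Int.even_add, Int.even_mul, Int.even_mul, Int.even_mul]; tauto
  have d2 : Even (t * u' + t' * u) := by
    rw [Int.even_add, Int.even_mul, Int.even_mul]; tauto
  obtain ⟨T, hT⟩ := d1
  obtain ⟨U, hU⟩ := d2
  refine ⟨T, U, ?_, by omega, by omega⟩
  have h4 : (2 * T) ^ 2 - D * (2 * U) ^ 2 = 16 := by
    have hT' : 2 * T = t * t' + D * (u * u') := by omega
    have hU' : 2 * U = t * u' + t' * u := by omega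
    rw [hT', hU']
    linear_combination (t' ^ 2 - D * u' ^ 2) * h1 + 4 * h2
  linarith

lemma aux_action (a b c D t u p : ℤ) (hD : D = b ^ 2 - 4 * a * c) (hp : 2 * p = t - b * u)
    (B : Matrix (Fin 2) (Fin 2) ℤ) (h00 : B 0 0 = p) (h01 : B 0 1 = -(c * u))
    (h10 : B 1 0 = a * u) (h11 : B 1 1 = p + b * u) (s : ℝ) (hs : s ^ 2 = (D : ℝ))
    (v : Fin 2 → ℤ) :
    (2 * a * ((B.mulVec v) 0 : ℝ) + ((b : ℝ) - s) * ((B.mulVec v) 1)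
        = ((t : ℝ) - u * s) / 2 * (2 * a * (v 0 : ℝ) + ((b : ℝ) - s) * (v 1))) ∧
    (2 * a * ((B.mulVec v) 0 : ℝ) + ((b : ℝ) + s) * ((B.mulVec v) 1)
        = ((t : ℝ) + u * s) / 2 * (2 * a * (v 0 : ℝ) + ((b : ℝ) + s) * (v 1))) := by
  have hBv := mulVec2 B v
  rw [h00, h01, h10, h11] at hBv
  have h0 : (B.mulVec v) 0 = p * v 0 + -(c * u) * v 1 := by rw [hBv]; simp
  have h1 : (B.mulVec v) 1 = a * u * v 0 + (p + b * u) * v 1 := by rw [hBv]; simp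
  have hpr : (2 : ℝ) * (p : ℝ) = (t : ℝ) - b * u := by exact_mod_cast congrArg (Int.cast : ℤ → ℝ) hp
  have hDr : (D : ℝ) = (b : ℝ) ^ 2 - 4 * a * c := by exact_mod_cast congrArg (Int.cast : ℤ → ℝ) hD
  rw [h0, h1]
  push_cast
  constructor
  · linear_combination (- (v 1 : ℝ) * u / 2) * hs + (- (v 1 : ℝ) * u / 2) * hDr +
      ((v 0 : ℝ) * a + (v 1 : ℝ) * ((b : ℝ) - s) / 2) * hpr
  · linear_combination (- (v 1 : ℝ) * u / 2) * hs + (- (v 1 : ℝ) * u / 2) * hDr +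
      ((v 0 : ℝ) * a + (v 1 : ℝ) * ((b : ℝ) + s) / 2) * hpr

lemma aux_autom (a b c D t u : ℤ) (hD : D = b ^ 2 - 4 * a * c) (hsol : t ^ 2 - D * u ^ 2 = 4) :
    ∃ B : Matrix (Fin 2) (Fin 2) ℤ, B.det = 1 ∧ (∀ w, qf a b c (B.mulVec w) = qf a b c w) ∧
      ∀ (s : ℝ), s ^ 2 = (D : ℝ) → ∀ v : Fin 2 → ℤ,
        (2 * a * ((B.mulVec v) 0 : ℝ) + ((b : ℝ) - s) * ((B.mulVec v) 1)
            = ((t : ℝ) - u * s) / 2 * (2 * a * (v 0 : ℝ) + ((b : ℝ) - s) * (v 1))) ∧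
        (2 * a * ((B.mulVec v) 0 : ℝ) + ((b : ℝ) + s) * ((B.mulVec v) 1)
            = ((t : ℝ) + u * s) / 2 * (2 * a * (v 0 : ℝ) + ((b : ℝ) + s) * (v 1))) := by
  have hpar : Even t ↔ Even D ∨ Even u := aux_parity D t u hsol
  have hbe : Even (t - b * u) := by
    have h2e : Even (2 * (-(2 * a * c)) : ℤ) := ⟨-(2 * a * c), by ring⟩
    have hDb : Even D ↔ Even b := by
      rw [hD, show b ^ 2 - 4 * a * c = b * b + 2 * (-(2 * a * c)) by ring,
        Int.even_add, Int.even_mul]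
      tauto
    rw [Int.even_sub, Int.even_mul]
    tauto
  obtain ⟨p, hp'⟩ := hbe
  have hp : 2 * p = t - b * u := by omega
  set B : Matrix (Fin 2) (Fin 2) ℤ := !![p, -(c * u); a * u, p + b * u] with hB
  have h00 : B 0 0 = p := rfl
  have h01 : B 0 1 = -(c * u) := rfl
  have h10 : B 1 0 = a * u := rfl
  have h11 : B 1 1 = p + b * u := rfl
  have hdet1 : p * (p + b * u) + c * u * (a * u) = 1 := by
    have h4 : 4 * (p * (p + b * u) + c * u * (a * u)) = 4 := by
      linear_combination hsol + u ^ 2 * hD + (2*p + 2*b*u + (t - b*u)) * hp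
    linarith
  refine ⟨B, ?_, ?_, ?_⟩
  · rw [Matrix.det_fin_two, h00, h01, h10, h11]; linarith [hdet1]
  · intro w
    have hw := mulVec2 B w
    rw [h00, h01, h10, h11] at hw
    rw [hw, qf_pair]
    have : qf a b c w = a * w 0 ^ 2 + b * (w 0 * w 1) + c * w 1 ^ 2 := rfl
    rw [this]
    linear_combination (a * (w 0)^2 + b * (w 0 * w 1) + c * (w 1)^2) * hdet1
  · intro s hs v
    exact aux_action a b c D t u p hD hp B h00 h01 h10 h11 s hs v

lemma aux_classify (a b c D : ℤ) (ha : a ≠ 0) (hgcd : Int.gcd a (Int.gcd b c) = 1)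
    (hD : D = b ^ 2 - 4 * a * c) (B : Matrix (Fin 2) (Fin 2) ℤ) (hdet : B.det = 1)
    (hpres : ∀ w, qf a b c (B.mulVec w) = qf a b c w) :
    ∃ t u p : ℤ, t ^ 2 - D * u ^ 2 = 4 ∧ 2 * p = t - b * u ∧
      B 0 0 = p ∧ B 0 1 = -(c * u) ∧ B 1 0 = a * u ∧ B 1 1 = p + b * u := by
  set p := B 0 0 with hp0
  set q := B 0 1 with hq0
  set r := B 1 0 with hr0
  set s := B 1 1 with hs0
  have e4 : p * s - q * r = 1 := by rw [Matrix.det_fin_two] at hdet; linarith [hdet]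
  have e1 : a * p ^ 2 + b * (p * r) + c * r ^ 2 = a := by
    have := hpres ![1, 0]
    rw [mulVec2] at this
    simpa [qf_pair, qf] using this
  have e3' : qf a b c (B.mulVec ![1, 1]) = qf a b c ![1, 1] := hpres ![1, 1]
  have e3 : a * (p + q) ^ 2 + b * ((p + q) * (r + s)) + c * (r + s) ^ 2 = a + b + c := by
    rw [mulVec2] at e3'
    simpa [qf_pair, qf] using e3'
  have e2 : a * q ^ 2 + b * (q * s) + c * s ^ 2 = c := by
    have := hpres ![0, 1]
    rw [mulVec2] at this
    simpa [qf_pair, qf] using this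
  -- cross relation
  have e3c : 2 * a * (p * q) + b * (p * s + q * r) + 2 * c * (r * s) = b := by
    linear_combination e3 - e1 - e2
  have key1 : a * q + c * r = 0 := by
    have h2 : 2 * (a * q + c * r) = 0 := by
      linear_combination p * e3c - 2 * q * e1 - (b * p + 2 * c * r) * e4
    linarith
  have key2 : a * s - a * p - b * r = 0 := by
    have h2 : 2 * (a * s - a * p - b * r) = 0 := by
      linear_combination r * e3c - 2 * s * e1 + (2 * a * p + b * r) * e4
    linarith
  -- a divides r
  have hbr : a ∣ b * r := ⟨s - p, by linarith⟩
  have hcr : a ∣ c * r := ⟨-q, by linarith⟩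
  have hgr : a ∣ r * (Int.gcd b c : ℤ) := by
    rw [Int.gcd_eq_gcd_ab b c]
    have : r * (b * Int.gcdA b c + c * Int.gcdB b c)
        = (b * r) * Int.gcdA b c + (c * r) * Int.gcdB b c := by ring
    rw [this]
    exact dvd_add (hbr.mul_right _) (hcr.mul_right _)
  have hco : IsCoprime a ((Int.gcd b c : ℤ)) := Int.isCoprime_iff_gcd_eq_one.mpr hgcd
  have har : a ∣ r := hco.dvd_of_dvd_mul_right hgr
  obtain ⟨u, hu⟩ := har
  have hq : q = -(c * u) := by
    have : a * q = a * (-(c * u)) := by rw [hu] at key1; linarith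
    exact mul_left_cancel₀ ha this
  have hs : s = p + b * u := by
    have : a * s = a * (p + b * u) := by rw [hu] at key2; linarith
    exact mul_left_cancel₀ ha this
  refine ⟨p + s, u, p, ?_, by rw [hs]; ring, rfl, hq, by rw [hu], by rw [hs]⟩
  have e4' : p * (p + b * u) - -(c * u) * (a * u) = 1 := by rw [hq, hu, hs] at e4; exact e4
  rw [hs]
  linear_combination 4 * e4' + (u ^ 2) * (by linarith [hD] : (b:ℤ) ^ 2 - 4 * a * c - D = 0)

lemma relV_refl (a b c : ℤ) (v : Fin 2 → ℤ) : relV a b c v v :=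
  ⟨1, Matrix.det_one, fun u => by rw [Matrix.one_mulVec], Matrix.one_mulVec v⟩

lemma relV_symm {a b c : ℤ} {v w : Fin 2 → ℤ} (h : relV a b c v w) : relV a b c w v := by
  obtain ⟨B, hdet, hpres, hvw⟩ := h
  refine ⟨B.adjugate, ?_, ?_, ?_⟩
  · rw [Matrix.det_adjugate, hdet]; ring
  · intro u
    have h1 : B.mulVec (B.adjugate.mulVec u) = u := by
      rw [Matrix.mulVec_mulVec, Matrix.mul_adjugate, hdet, one_smul, Matrix.one_mulVec]
    calc qf a b c (B.adjugate.mulVec u) = qf a b c (B.mulVec (B.adjugate.mulVec u)) :=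
          (hpres _).symm
      _ = qf a b c u := by rw [h1]
  · rw [← hvw, Matrix.mulVec_mulVec, Matrix.adjugate_mul, hdet, one_smul, Matrix.one_mulVec]

lemma relV_trans {a b c : ℤ} {v w x : Fin 2 → ℤ} (h1 : relV a b c v w) (h2 : relV a b c w x) :
    relV a b c v x := by
  obtain ⟨B, hdet, hpres, hvw⟩ := h1
  obtain ⟨C, hdet', hpres', hwx⟩ := h2
  exact ⟨C * B, by rw [Matrix.det_mul, hdet, hdet']; ring,
    fun u => by rw [← Matrix.mulVec_mulVec, hpres', hpres],
    by rw [← Matrix.mulVec_mulVec, hvw, hwx]⟩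

lemma relV_qf {a b c : ℤ} {v w : Fin 2 → ℤ} (h : relV a b c v w) : qf a b c w = qf a b c v := by
  obtain ⟨B, _, hpres, hvw⟩ := h
  rw [← hvw, hpres]

lemma act_M (a b c D t u p : ℤ) (hD : D = b ^ 2 - 4 * a * c) (hp : 2 * p = t - b * u)
    (B : Matrix (Fin 2) (Fin 2) ℤ) (h00 : B 0 0 = p) (h01 : B 0 1 = -(c * u))
    (h10 : B 1 0 = a * u) (h11 : B 1 1 = p + b * u) (s : ℝ) (hs : s ^ 2 = (D : ℝ))
    (v : Fin 2 → ℤ) :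
    Mval a b s (B.mulVec v) = ((t : ℝ) - u * s) / 2 * Mval a b s v ∧
    Lval a b s (B.mulVec v) = ((t : ℝ) + u * s) / 2 * Lval a b s v :=
  aux_action a b c D t u p hD hp B h00 h01 h10 h11 s hs v

lemma aux_autom' (a b c D t u : ℤ) (hD : D = b ^ 2 - 4 * a * c) (hsol : t ^ 2 - D * u ^ 2 = 4) :
    ∃ B : Matrix (Fin 2) (Fin 2) ℤ, B.det = 1 ∧ (∀ w, qf a b c (B.mulVec w) = qf a b c w) ∧
      ∀ (s : ℝ), s ^ 2 = (D : ℝ) → ∀ v : Fin 2 → ℤ,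
        Mval a b s (B.mulVec v) = ((t : ℝ) - u * s) / 2 * Mval a b s v ∧
        Lval a b s (B.mulVec v) = ((t : ℝ) + u * s) / 2 * Lval a b s v :=
  aux_autom a b c D t u hD hsol

set_option maxHeartbeats 2000000 in
theorem stmt10 (a b c D : ℤ) (hgcd : Int.gcd a (Int.gcd b c) = 1)
    (hD : D = b ^ 2 - 4 * a * c) (hDpos : 0 < D) (hns : ¬ ∃ k : ℤ, k ^ 2 = D)
    (t₀ u₀ : ℤ) (hPell : t₀ ^ 2 - D * u₀ ^ 2 = 4) (ht₀ : 0 < t₀) (hu₀ : 0 < u₀)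
    (hmin : ∀ t u : ℤ, t ^ 2 - D * u ^ 2 = 4 → 0 < t → 0 < u → u₀ ≤ u)
    (ε : ℝ) (hε : ε = ((t₀ : ℝ) + u₀ * Real.sqrt D) / 2)
    (n : ℤ) (hn : n ≠ 0) :
    (∀ v : Fin 2 → ℤ, qf a b c v = n →
      ∃! w : Fin 2 → ℤ, relV a b c v w ∧ w ∈ PQ a b D ε) ∧
    RQ a b c n = Nat.card {v : Fin 2 → ℤ // qf a b c v = n ∧ v ∈ PQ a b D ε} := by
  have ha : a ≠ 0 := by
    intro h
    exact hns ⟨b, by rw [hD, h]; ring⟩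
  have hD0 : (0 : ℝ) ≤ (D : ℝ) := by exact_mod_cast hDpos.le
  set sq : ℝ := Real.sqrt D with hsqdef
  have hsq : sq ^ 2 = (D : ℝ) := Real.sq_sqrt hD0
  have hsqpos : 0 < sq := Real.sqrt_pos.mpr (by exact_mod_cast hDpos)
  have ht₀3 : 3 ≤ t₀ := by nlinarith [hPell, hDpos, hu₀]
  have hε1 : 1 < ε := by
    rw [hε]
    have h1 : (3 : ℝ) ≤ (t₀ : ℝ) := by exact_mod_cast ht₀3
    have h2 : (1 : ℝ) ≤ (u₀ : ℝ) := by exact_mod_cast hu₀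
    nlinarith [hsqpos]
  have hεpos : (0 : ℝ) < ε := lt_trans one_pos hε1
  have hεne : ε ≠ 0 := ne_of_gt hεpos
  -- conjugate product
  have hval_conj : ∀ t u : ℤ, t ^ 2 - D * u ^ 2 = 4 →
      (((t : ℝ) + u * sq) / 2) * (((t : ℝ) - u * sq) / 2) = 1 := by
    intro t u hsol
    have hsr : ((t : ℝ) ^ 2 - (D : ℝ) * (u : ℝ) ^ 2) = 4 := by exact_mod_cast hsol
    linear_combination (1 / 4 : ℝ) * hsr + (-((u : ℝ) ^ 2) / 4) * hsq
  -- epsilon powers (natural)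
  have heps_pow : ∀ k : ℕ, ∃ t u : ℤ, t ^ 2 - D * u ^ 2 = 4 ∧ ((t : ℝ) + u * sq) / 2 = ε ^ k := by
    intro k
    induction k with
    | zero => exact ⟨2, 0, by ring, by norm_num⟩
    | succ k ih =>
      obtain ⟨t, u, hsol, hval⟩ := ih
      obtain ⟨T, U, hsol', hT, hU⟩ := aux_sol_mul D t u t₀ u₀ hsol hPell
      refine ⟨T, U, hsol', ?_⟩
      have hTr : 2 * (T : ℝ) = t * t₀ + D * (u * u₀) := by exact_mod_cast hT
      have hUr : 2 * (U : ℝ) = t * u₀ + t₀ * u := by exact_mod_cast hU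
      have hmul : ((T : ℝ) + U * sq) / 2 = (((t : ℝ) + u * sq) / 2) * (((t₀ : ℝ) + u₀ * sq) / 2) := by
        linear_combination (1 / 4 : ℝ) * hTr + (sq / 4) * hUr + (-((u : ℝ) * (u₀ : ℝ)) / 4) * hsq
      rw [hmul, hval, ← hε, pow_succ]
  -- epsilon powers (integer, with sign, minus-form)
  have heps_zpow : ∀ (k : ℤ) (sgn : ℝ), (sgn = 1 ∨ sgn = -1) →
      ∃ t u : ℤ, t ^ 2 - D * u ^ 2 = 4 ∧ ((t : ℝ) - u * sq) / 2 = sgn * ε ^ k := by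
    intro k
    have hbase : ∃ t u : ℤ, t ^ 2 - D * u ^ 2 = 4 ∧ ((t : ℝ) - u * sq) / 2 = ε ^ k := by
      rcases le_or_gt 0 k with hk | hk
      · obtain ⟨t, u, hsol, hval⟩ := heps_pow k.toNat
        refine ⟨t, -u, by linear_combination hsol, ?_⟩
        have : ((t : ℝ) - (-u : ℤ) * sq) / 2 = ((t : ℝ) + u * sq) / 2 := by push_cast; ring
        rw [this, hval, ← zpow_natCast ε, Int.toNat_of_nonneg hk]
      · obtain ⟨t, u, hsol, hval⟩ := heps_pow (-k).toNat
        have hval' : ((t : ℝ) + u * sq) / 2 = ε ^ (-k) := by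
          rw [hval, ← zpow_natCast ε, Int.toNat_of_nonneg (by omega : (0:ℤ) ≤ -k)]
        have h2 := hval_conj t u hsol
        refine ⟨t, u, hsol, ?_⟩
        have h3 : ((t : ℝ) - u * sq) / 2 = (ε ^ (-k))⁻¹ := by
          rw [← hval']
          exact eq_inv_of_mul_eq_one_right h2
        rw [h3, ← zpow_neg, neg_neg]
    obtain ⟨t, u, hsol, hval⟩ := hbase
    intro sgn hsgn
    rcases hsgn with h | h
    · exact ⟨t, u, hsol, by rw [hval, h, one_mul]⟩
    · refine ⟨-t, -u, by linear_combination hsol, ?_⟩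
      have : ((-t : ℤ) : ℝ) - ((-u : ℤ) : ℝ) * sq = -((t : ℝ) - u * sq) := by push_cast; ring
      rw [show (((-t : ℤ) : ℝ) - ((-u : ℤ) : ℝ) * sq) / 2 = -(((t : ℝ) - u * sq) / 2) by rw [this]; ring,
        hval, h]
      ring
  -- minimality
  have hminval : ∀ t u : ℤ, t ^ 2 - D * u ^ 2 = 4 → ε⁻¹ < ((t : ℝ) + u * sq) / 2 →
      ((t : ℝ) + u * sq) / 2 < ε → t = 2 ∧ u = 0 := by
    intro t u hsol hlo hhi
    have hprod := hval_conj t u hsol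
    set α := ((t : ℝ) + u * sq) / 2 with hαdef
    set β := ((t : ℝ) - u * sq) / 2 with hβdef
    have hαpos : 0 < α := lt_trans (inv_pos.mpr hεpos) hlo
    have hβpos : 0 < β := by nlinarith [hprod]
    have htposR : (0 : ℝ) < (t : ℝ) := by
      have : (t : ℝ) = α + β := by rw [hαdef, hβdef]; ring
      rw [this]; linarith
    have htpos : 0 < t := by exact_mod_cast htposR
    have hβlo : ε⁻¹ < β := by
      have h1 : 1 < ε * β := by nlinarith [hprod, hhi, hβpos]
      have h2 : ε⁻¹ * 1 < ε⁻¹ * (ε * β) := by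
        exact mul_lt_mul_of_pos_left h1 (inv_pos.mpr hεpos)
      rwa [mul_one, ← mul_assoc, inv_mul_cancel₀ hεne, one_mul] at h2
    have hβhi : β < ε := by
      have h1 : ε⁻¹ * ε = 1 := inv_mul_cancel₀ hεne
      nlinarith [hprod, hlo, hαpos, hβpos]
    rcases lt_trichotomy u 0 with hu | hu | hu
    · exfalso
      have hs' : t ^ 2 - D * (-u) ^ 2 = 4 := by linear_combination hsol
      have h1 := hmin t (-u) hs' htpos (by omega)
      have hu2 : u₀ ^ 2 ≤ u ^ 2 := by nlinarith [mul_le_mul h1 h1 hu₀.le (le_trans hu₀.le h1)]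
      have ht2 : t₀ ^ 2 ≤ t ^ 2 := by nlinarith [mul_le_mul_of_nonneg_left hu2 hDpos.le]
      have htle : t₀ ≤ t := by nlinarith [ht2, mul_pos ht₀ htpos]
      have hc1 : ((t₀ : ℝ)) ≤ (t : ℝ) := by exact_mod_cast htle
      have hc2 : ((u₀ : ℝ)) ≤ ((-u : ℤ) : ℝ) := by exact_mod_cast h1
      have : ε ≤ β := by
        rw [hε, hβdef]
        push_cast at hc2 ⊢
        nlinarith [hsqpos]
      linarith
    · refine ⟨?_, hu⟩
      have : u = 0 := hu
      rw [this] at hsol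
      nlinarith [hsol, htpos]
    · exfalso
      have h1 := hmin t u hsol htpos hu
      have hu2 : u₀ ^ 2 ≤ u ^ 2 := by nlinarith [mul_le_mul h1 h1 hu₀.le (le_trans hu₀.le h1)]
      have ht2 : t₀ ^ 2 ≤ t ^ 2 := by nlinarith [mul_le_mul_of_nonneg_left hu2 hDpos.le]
      have htle : t₀ ≤ t := by nlinarith [ht2, mul_pos ht₀ htpos]
      have hc1 : ((t₀ : ℝ)) ≤ (t : ℝ) := by exact_mod_cast htle
      have hc2 : ((u₀ : ℝ)) ≤ (u : ℝ) := by exact_mod_cast h1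
      have : ε ≤ α := by
        rw [hε, hαdef]
        nlinarith [hsqpos]
      linarith
  -- m
  have h4an : (4 : ℝ) * (a : ℝ) * (n : ℝ) ≠ 0 := by
    have h1 : ((a : ℝ)) ≠ 0 := Int.cast_ne_zero.mpr ha
    have h2 : ((n : ℝ)) ≠ 0 := Int.cast_ne_zero.mpr hn
    positivity
  have hanpos : 0 < |(a : ℝ) * (n : ℝ)| := by
    apply abs_pos.mpr
    exact mul_ne_zero (Int.cast_ne_zero.mpr ha) (Int.cast_ne_zero.mpr hn)
  set m : ℝ := 2 * Real.sqrt |(a : ℝ) * (n : ℝ)| with hmdef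
  have hm : 0 < m := by
    have := Real.sqrt_pos.mpr hanpos
    rw [hmdef]; linarith
  have hm2 : m ^ 2 = 4 * |(a : ℝ) * (n : ℝ)| := by
    rw [hmdef, mul_pow, Real.sq_sqrt (abs_nonneg _)]; ring
  -- primary characterization
  have hPQiff : ∀ v : Fin 2 → ℤ, qf a b c v = n →
      (v ∈ PQ a b D ε ↔ (m / ε < Mval a b sq v ∧ Mval a b sq v ≤ m)) := by
    intro v hv
    have hprod : Lval a b sq v * Mval a b sq v = 4 * (a : ℝ) * (n : ℝ) := by
      rw [LMprod a b c D hD sq hsq v, hv]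
    have hM0 : Mval a b sq v ≠ 0 := by
      intro h
      rw [h, mul_zero] at hprod
      exact h4an hprod.symm
    have habs : |Lval a b sq v| * |Mval a b sq v| = m ^ 2 := by
      rw [← abs_mul, hprod, hm2]
      rw [show (4 : ℝ) * (a : ℝ) * (n : ℝ) = 4 * ((a : ℝ) * (n : ℝ)) by ring, abs_mul]
      norm_num
    rw [mem_PQ_iff, ← hsqdef]
    constructor
    · rintro ⟨h1, h2, h3⟩
      have hMabs : |Mval a b sq v| = Mval a b sq v := abs_of_pos h1
      have hX : |Lval a b sq v / Mval a b sq v| * Mval a b sq v = |Lval a b sq v| := by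
        rw [abs_div, hMabs]
        field_simp
      rw [hMabs] at habs
      have hXM : |Lval a b sq v / Mval a b sq v| * (Mval a b sq v * Mval a b sq v) = m ^ 2 := by
        calc |Lval a b sq v / Mval a b sq v| * (Mval a b sq v * Mval a b sq v)
            = (|Lval a b sq v / Mval a b sq v| * Mval a b sq v) * Mval a b sq v := by ring
          _ = |Lval a b sq v| * Mval a b sq v := by rw [hX]
          _ = m ^ 2 := habs
      constructor
      · rw [div_lt_iff₀ hεpos]
        have hmm : m ^ 2 < (Mval a b sq v * ε) ^ 2 := by
          nlinarith [hXM, mul_lt_mul_of_pos_right h3 (mul_pos h1 h1)]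
        nlinarith [hmm, hm, mul_pos h1 hεpos]
      · nlinarith [hXM, h2, h1, hm]
    · rintro ⟨h1, h2⟩
      have hMpos : 0 < Mval a b sq v := lt_trans (by positivity) h1
      have hMabs : |Mval a b sq v| = Mval a b sq v := abs_of_pos hMpos
      have hX : |Lval a b sq v / Mval a b sq v| * Mval a b sq v = |Lval a b sq v| := by
        rw [abs_div, hMabs]
        field_simp
      rw [hMabs] at habs
      have hXM : |Lval a b sq v / Mval a b sq v| * (Mval a b sq v * Mval a b sq v) = m ^ 2 := by
        calc |Lval a b sq v / Mval a b sq v| * (Mval a b sq v * Mval a b sq v)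
            = (|Lval a b sq v / Mval a b sq v| * Mval a b sq v) * Mval a b sq v := by ring
          _ = |Lval a b sq v| * Mval a b sq v := by rw [hX]
          _ = m ^ 2 := habs
      have h1' : m < ε * Mval a b sq v := by rw [div_lt_iff₀ hεpos] at h1; linarith [h1]
      refine ⟨hMpos, ?_, ?_⟩
      · nlinarith [hXM, h2, hMpos, hm, mul_self_le_mul_self hMpos.le h2, mul_pos hMpos hMpos]
      · nlinarith [hXM, h1', hMpos, hm, hεpos, mul_pos hεpos hMpos]
  -- part 1
  have part1 : ∀ v : Fin 2 → ℤ, qf a b c v = n →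
      ∃! w : Fin 2 → ℤ, relV a b c v w ∧ w ∈ PQ a b D ε := by
    intro v hv
    have hprodv : Lval a b sq v * Mval a b sq v = 4 * (a : ℝ) * (n : ℝ) := by
      rw [LMprod a b c D hD sq hsq v, hv]
    have hMv0 : Mval a b sq v ≠ 0 := by
      intro h
      rw [h, mul_zero] at hprodv
      exact h4an hprodv.symm
    have habsM : 0 < |Mval a b sq v| := abs_pos.mpr hMv0
    obtain ⟨j, hj⟩ := exists_mem_Ioc_zpow (div_pos hm habsM) hε1
    obtain ⟨hj1, hj2⟩ := hj
    have hεk : ∃ k : ℤ, m / ε < ε ^ k * |Mval a b sq v| ∧ ε ^ k * |Mval a b sq v| ≤ m := by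
      rcases eq_or_lt_of_le hj2 with heq | hlt
      · refine ⟨j + 1, ?_, ?_⟩
        · have : ε ^ (j+1) * |Mval a b sq v| = m := by
            rw [← heq]; field_simp
          rw [this]
          exact div_lt_self hm hε1
        · rw [show ε ^ (j+1) * |Mval a b sq v| = m from by rw [← heq]; field_simp]
      · refine ⟨j, ?_, ?_⟩
        · rw [div_lt_iff₀ hεpos]
          rw [div_lt_iff₀ habsM] at hlt
          calc m < ε ^ (j + 1) * |Mval a b sq v| := hlt
            _ = ε ^ j * |Mval a b sq v| * ε := by
                rw [zpow_add_one₀ hεne]; ring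
        · rw [lt_div_iff₀ habsM] at hj1
          linarith [hj1]
    obtain ⟨k, hk1, hk2⟩ := hεk
    have hsgnEx : ∃ sgn : ℝ, (sgn = 1 ∨ sgn = -1) ∧ sgn * Mval a b sq v = |Mval a b sq v| := by
      rcases hMv0.lt_or_gt with h | h
      · exact ⟨-1, Or.inr rfl, by rw [abs_of_neg h]; ring⟩
      · exact ⟨1, Or.inl rfl, by rw [abs_of_pos h]; ring⟩
    obtain ⟨sgn, hsgn01, hsgnM⟩ := hsgnEx
    obtain ⟨t, u, hsol, hval⟩ := heps_zpow k sgn hsgn01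
    obtain ⟨B, hBdet, hBpres, hBact⟩ := aux_autom' a b c D t u hD hsol
    set w : Fin 2 → ℤ := B.mulVec v with hwdef
    have hrelw : relV a b c v w := ⟨B, hBdet, hBpres, rfl⟩
    have hqfw : qf a b c w = n := by rw [hwdef, hBpres, hv]
    have hMw : Mval a b sq w = ε ^ k * |Mval a b sq v| := by
      rw [hwdef, (hBact sq hsq v).1, hval, ← hsgnM]
      ring
    have hPw : w ∈ PQ a b D ε := by
      rw [hPQiff w hqfw, hMw]
      exact ⟨hk1, hk2⟩
    refine ⟨w, ⟨hrelw, hPw⟩, ?_⟩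
    rintro w' ⟨hrel', hP'⟩
    -- uniqueness
    obtain ⟨C, hCdet, hCpres, hCw⟩ := relV_trans (relV_symm hrelw) hrel'
    obtain ⟨t', u', p', hsol', hp', h00, h01, h10, h11⟩ :=
      aux_classify a b c D ha hgcd hD C hCdet hCpres
    have hact' := act_M a b c D t' u' p' hD hp' C h00 h01 h10 h11 sq hsq w
    rw [hCw] at hact'
    have hqfw' : qf a b c w' = n := by rw [relV_qf hrel', hv]
    have hw1 := (hPQiff w hqfw).mp hPw
    have hw2 := (hPQiff w' hqfw').mp hP'
    have hMwpos : 0 < Mval a b sq w := lt_trans (by positivity) hw1.1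
    set β : ℝ := ((t' : ℝ) - u' * sq) / 2 with hβdef
    have hβM : β * Mval a b sq w = Mval a b sq w' := hact'.1.symm
    have hm1 : m < ε * Mval a b sq w := by rw [div_lt_iff₀ hεpos] at hw1; linarith [hw1.1]
    have hm2' : m < ε * Mval a b sq w' := by rw [div_lt_iff₀ hεpos] at hw2; linarith [hw2.1]
    have hβlo : ε⁻¹ < β := by
      have h1 : 1 < ε * β := by nlinarith [hβM, hm2', hw1.2, hMwpos, hεpos]
      have h2 : ε⁻¹ * 1 < ε⁻¹ * (ε * β) := mul_lt_mul_of_pos_left h1 (inv_pos.mpr hεpos)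
      rwa [mul_one, ← mul_assoc, inv_mul_cancel₀ hεne, one_mul] at h2
    have hβhi : β < ε := by nlinarith [hβM, hm1, hw2.2, hMwpos]
    have hsol'' : t' ^ 2 - D * (-u') ^ 2 = 4 := by linear_combination hsol'
    have hval'' : ((t' : ℝ) + ((-u' : ℤ) : ℝ) * sq) / 2 = β := by
      rw [hβdef]; push_cast; ring
    obtain ⟨ht2, hu0⟩ := hminval t' (-u') hsol'' (by rw [hval'']; exact hβlo)
      (by rw [hval'']; exact hβhi)
    have hu' : u' = 0 := by omega
    have hβ1 : β = 1 := by rw [hβdef, ht2, hu']; norm_num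
    have hα1 : ((t' : ℝ) + u' * sq) / 2 = 1 := by rw [ht2, hu']; norm_num
    have hactL := (act_M a b c D t' u' p' hD hp' C h00 h01 h10 h11 sq hsq w).2
    rw [hCw] at hactL
    have hMeq : Mval a b sq w' = Mval a b sq w := by rw [← hβM, hβ1, one_mul]
    have hLeq : Lval a b sq w' = Lval a b sq w := by rw [hactL, hα1, one_mul]
    -- coordinates
    simp only [Mval, Lval] at hMeq hLeq
    have hy : ((w' 1 : ℤ) : ℝ) = ((w 1 : ℤ) : ℝ) := by
      have h2 : 2 * sq * ((w' 1 : ℤ) : ℝ) = 2 * sq * ((w 1 : ℤ) : ℝ) := by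
        linear_combination hLeq - hMeq
      exact mul_left_cancel₀ (by positivity) h2
    have hx : ((w' 0 : ℤ) : ℝ) = ((w 0 : ℤ) : ℝ) := by
      have haR : ((a : ℝ)) ≠ 0 := Int.cast_ne_zero.mpr ha
      have h2 : 2 * (a : ℝ) * ((w' 0 : ℤ) : ℝ) = 2 * (a : ℝ) * ((w 0 : ℤ) : ℝ) := by
        linear_combination hMeq - ((b : ℝ) - sq) * hy
      exact mul_left_cancel₀ (by simpa using haR) h2
    funext i
    fin_cases i
    · exact_mod_cast hx
    · exact_mod_cast hy
  refine ⟨part1, ?_⟩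
  -- part 2
  have hF : ∀ v : {v : Fin 2 → ℤ // qf a b c v = n},
      ∃ w : Fin 2 → ℤ, (relV a b c v.1 w ∧ w ∈ PQ a b D ε) := fun v => (part1 v.1 v.2).exists
  let F : {v : Fin 2 → ℤ // qf a b c v = n} → {v : Fin 2 → ℤ // qf a b c v = n ∧ v ∈ PQ a b D ε} :=
    fun v => ⟨(hF v).choose, by
      have hspec := (hF v).choose_spec
      exact ⟨by rw [relV_qf hspec.1, v.2], hspec.2⟩⟩
  have hresp : ∀ v w : {v : Fin 2 → ℤ // qf a b c v = n}, orbRel a b c n v w → F v = F w := by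
    intro v w h
    apply Subtype.ext
    have hv := (hF v).choose_spec
    have hw := (hF w).choose_spec
    exact (part1 v.1 v.2).unique hv ⟨relV_trans h hw.1, hw.2⟩
  let F' : Quot (orbRel a b c n) → {v : Fin 2 → ℤ // qf a b c v = n ∧ v ∈ PQ a b D ε} :=
    Quot.lift F hresp
  have hF'mk : ∀ v : {v : Fin 2 → ℤ // qf a b c v = n}, F' (Quot.mk _ v) = F v := fun _ => rfl
  have hFval : ∀ v : {v : Fin 2 → ℤ // qf a b c v = n}, (F v).val = (hF v).choose := fun _ => rfl
  have hinj : Function.Injective F' := by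
    intro x y
    induction x using Quot.ind with
    | _ v =>
      induction y using Quot.ind with
      | _ w =>
        intro h
        have hv := (hF v).choose_spec
        have hw := (hF w).choose_spec
        have heq : (hF v).choose = (hF w).choose := by
          have := congrArg Subtype.val h
          rw [hF'mk, hF'mk, hFval, hFval] at this
          exact this
        apply Quot.sound
        exact relV_trans hv.1 (relV_symm (heq ▸ hw.1))
  have hsurj : Function.Surjective F' := by
    rintro ⟨w, hqf, hP⟩
    refine ⟨Quot.mk _ ⟨w, hqf⟩, ?_⟩
    apply Subtype.ext
    rw [hF'mk, hFval]
    exact (part1 w hqf).unique ((hF ⟨w, hqf⟩).choose_spec) ⟨relV_refl a b c w, hP⟩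
  exact Nat.card_eq_of_bijective F' ⟨hinj, hsurj⟩
end

section
/- With χ the Kronecker character mod 5 (χ(1)=χ(4)=1, χ(2)=χ(3)=−1), the Dedekind zeta function of ℚ(√5) satisfies ζ_{ℚ(√5)}(2) = 2√5 π⁴/375 and ζ_{ℚ(√5)}(4) = 4√5 π⁸/84375. -/
open scoped Real

/-- The Kronecker (Legendre) character mod 5: `χ(1)=χ(4)=1`, `χ(2)=χ(3)=-1`, `χ(0)=0`. -/
def chi5 (n : ℕ) : ℤ :=
  if n % 5 = 1 ∨ n % 5 = 4 then 1 else if n % 5 = 2 ∨ n % 5 = 3 then -1 else 0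

/-!
The Gauss sum of `χ` gives `√5 χ(n) = 2 (cos (2πn/5) - cos (4πn/5))`, so `L(2k, χ)` is a
combination of the Fourier series `∑ cos (2πnx) / n^(2k)`, whose sums are Bernoulli polynomials
`B_{2k}(x)` up to explicit constants. Evaluating at `x = 1/5, 2/5` gives
`L(2, χ) = 4√5π²/125` and `L(4, χ) = 8√5π⁴/1875`; multiply by `ζ(2) = π²/6` and
`ζ(4) = π⁴/90`.
-/

open Real
open scoped Nat

lemma cos_two_pi_mul_div_natCast_mod (m N : ℕ) :
    cos (2 * π * m / N) = cos (2 * π * (m % N : ℕ) / N) := by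
  rcases N.eq_zero_or_pos with rfl | hN
  · simp
  have hm : (m : ℝ) = (m % N : ℕ) + (m / N : ℕ) * N := by
    exact_mod_cast (Nat.mod_add_div' m N).symm
  rw [hm, ← cos_add_nat_mul_two_pi (2 * π * (m % N : ℕ) / N) (m / N)]
  congr 1
  field_simp

lemma cos_two_pi_mul_sub_div (r N : ℝ) (hN : N ≠ 0) :
    cos (2 * π * (N - r) / N) = cos (2 * π * r / N) := by
  rw [show 2 * π * (N - r) / N = 2 * π - 2 * π * r / N by field_simp, cos_two_pi_sub]

lemma HasSum.comp_succ_div_pow {K : Type*} [DivisionRing K] [TopologicalSpace K]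
    [IsTopologicalAddGroup K] {a : ℕ → K} {p : ℕ} {S : K} (hp : p ≠ 0)
    (h : HasSum (fun n => a n / (n : K) ^ p) S) :
    HasSum (fun n => a (n + 1) / ((n : K) + 1) ^ p) S := by
  rw [← hasSum_nat_add_iff' 1] at h
  simpa [hp] using h

lemma Polynomial.aeval_bernoulli_two {K : Type*} [Field K] [CharZero K] (x : K) :
    Polynomial.aeval x (Polynomial.bernoulli 2) = x ^ 2 - x + 6⁻¹ := by
  simp [Polynomial.bernoulli, Finset.sum_range_succ, bernoulli_two]
  ring

lemma Polynomial.aeval_bernoulli_four {K : Type*} [Field K] [CharZero K] (x : K) :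
    Polynomial.aeval x (Polynomial.bernoulli 4) = x ^ 4 - 2 * x ^ 3 + x ^ 2 - 30⁻¹ := by
  simp [Polynomial.bernoulli, Finset.sum_range_succ, bernoulli_eq_bernoulli'_of_ne_one,
    bernoulli'_four, bernoulli'_three]
  norm_num [Nat.choose]
  ring

lemma cos_two_pi_div_five : cos (2 * π / 5) = (√5 - 1) / 4 := by
  rw [show 2 * π / 5 = 2 * (π / 5) by ring, cos_two_mul, cos_pi_div_five]
  linear_combination (1 / 8 : ℝ) * sq_sqrt (show (0 : ℝ) ≤ 5 by norm_num)

lemma cos_two_pi_mul_two_div_five : cos (2 * π * 2 / 5) = -(1 + √5) / 4 := by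
  rw [show 2 * π * 2 / 5 = π - π / 5 by ring, cos_pi_sub, cos_pi_div_five]
  ring

lemma chi5_mod (n : ℕ) : chi5 (n % 5) = chi5 n := by
  simp only [chi5, Nat.mod_mod]

lemma chi5_mul_sqrt_five (n : ℕ) :
    (chi5 n : ℝ) * √5 = 2 * (cos (2 * π * n * (1 / 5)) - cos (2 * π * n * (2 / 5))) := by
  have h1 : cos (2 * π * n * (1 / 5)) = cos (2 * π * (n % 5 : ℕ) / (5 : ℕ)) := by
    rw [← cos_two_pi_mul_div_natCast_mod]; push_cast; ring_nf
  have h2 : cos (2 * π * n * (2 / 5)) = cos (2 * π * (2 * n % 5 : ℕ) / (5 : ℕ)) := by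
    rw [← cos_two_pi_mul_div_natCast_mod]; push_cast; ring_nf
  have c3 : cos (2 * π * 3 / 5) = -(1 + √5) / 4 := by
    rw [← cos_two_pi_mul_two_div_five, show (3 : ℝ) = 5 - 2 by norm_num,
      cos_two_pi_mul_sub_div _ _ (by norm_num)]
  have c4 : cos (2 * π * 4 / 5) = (√5 - 1) / 4 := by
    rw [← cos_two_pi_div_five, show (4 : ℝ) = 5 - 1 by norm_num,
      cos_two_pi_mul_sub_div _ _ (by norm_num), mul_one]
  rw [h1, h2, ← chi5_mod, show 2 * n % 5 = 2 * (n % 5) % 5 by omega]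
  have hn : n % 5 < 5 := Nat.mod_lt _ (by norm_num)
  interval_cases n % 5 <;>
    norm_num [chi5, c3, c4, cos_two_pi_div_five, cos_two_pi_mul_two_div_five] <;> ring

lemma hasSum_chi5_div_pow {k : ℕ} (hk : k ≠ 0) :
    HasSum (fun n : ℕ => (chi5 n : ℝ) / (n : ℝ) ^ (2 * k))
      ((-1 : ℝ) ^ (k + 1) * (2 * π) ^ (2 * k) / (2 * k)! *
        (Polynomial.aeval (1 / 5 : ℝ) (Polynomial.bernoulli (2 * k)) -
          Polynomial.aeval (2 / 5 : ℝ) (Polynomial.bernoulli (2 * k))) / √5) := by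
  have hterm (n : ℕ) : (chi5 n : ℝ) / (n : ℝ) ^ (2 * k) = 2 / √5 *
      (1 / (n : ℝ) ^ (2 * k) * cos (2 * π * n * (1 / 5)) -
        1 / (n : ℝ) ^ (2 * k) * cos (2 * π * n * (2 / 5))) := by
    rw [eq_div_of_mul_eq (by positivity) (chi5_mul_sqrt_five n)]
    ring
  have h := ((hasSum_one_div_nat_pow_mul_cos hk (x := 1 / 5) ⟨by norm_num, by norm_num⟩).sub
    (hasSum_one_div_nat_pow_mul_cos hk (x := 2 / 5) ⟨by norm_num, by norm_num⟩)).mul_left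
      (2 / √5)
  rw [← funext hterm] at h
  convert h using 1
  · rfl -- `h` carries the `AddCommMonoid ℝ` instance obtained from the semiring structure
  · simp only [Polynomial.eval_map_algebraMap]
    ring

lemma hasSum_chi5_div_sq :
    HasSum (fun n : ℕ => (chi5 n : ℝ) / (n : ℝ) ^ 2) (4 * √5 * π ^ 2 / 125) := by
  convert hasSum_chi5_div_pow (k := 1) (by norm_num) using 1
  simp only [Nat.reduceMul, Nat.reduceAdd, Polynomial.aeval_bernoulli_two]
  field_simp
  norm_num [Nat.factorial]

lemma hasSum_chi5_div_pow_four :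
    HasSum (fun n : ℕ => (chi5 n : ℝ) / (n : ℝ) ^ 4) (8 * √5 * π ^ 4 / 1875) := by
  convert hasSum_chi5_div_pow (k := 2) (by norm_num) using 1
  simp only [Nat.reduceMul, Nat.reduceAdd, Polynomial.aeval_bernoulli_four]
  field_simp
  norm_num [Nat.factorial]

theorem stmt17 :
    (∑' n : ℕ, 1 / ((n : ℝ) + 1) ^ 2) * (∑' n : ℕ, (chi5 (n + 1) : ℝ) / ((n : ℝ) + 1) ^ 2)
        = 2 * Real.sqrt 5 * π ^ 4 / 375 ∧
    (∑' n : ℕ, 1 / ((n : ℝ) + 1) ^ 4) * (∑' n : ℕ, (chi5 (n + 1) : ℝ) / ((n : ℝ) + 1) ^ 4)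
        = 4 * Real.sqrt 5 * π ^ 8 / 84375 := by
  rw [(hasSum_zeta_two.comp_succ_div_pow (a := fun _ ↦ 1) two_ne_zero).tsum_eq,
    (hasSum_zeta_four.comp_succ_div_pow (a := fun _ ↦ 1) four_ne_zero).tsum_eq,
    (hasSum_chi5_div_sq.comp_succ_div_pow (a := fun n ↦ (chi5 n : ℝ)) two_ne_zero).tsum_eq,
    (hasSum_chi5_div_pow_four.comp_succ_div_pow (a := fun n ↦ (chi5 n : ℝ))
      four_ne_zero).tsum_eq]
  constructor <;> ring
end

section
/- There exists a badly approximable real number α such that the sequence (1/log M) ∑_{m=1}^M 1/(m² ‖mα‖²) does not converge as M → ∞. (One may take α with continued fraction expansion [0; a₁, a₂, …] where a_j = 1 for ρ^{2k} < j ≤ ρ^{2k+1} and a_j = a for ρ^{2k+1} < j ≤ ρ^{2k+2}, with a and then ρ sufficiently large.) -/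
/-!
For `α = [0; a₁, a₂, …]` with partial quotients bounded by `A`, best approximation gives
`‖mα‖ ≥ ‖q_j α‖ ≍ 1 / q_{j+1}` for `0 < m < q_{j+1}`, so `α` is badly approximable.
On a block `q_j ≤ m < q_{j+1}` the signed distances `mα - round (mα)` are `‖q_j α‖`-separated,
which bounds the contribution of the block to `∑ 1 / (m² ‖mα‖²)` by `O(a_{j+1}²)`, while the
single term `m = q_j` already contributes at least `a_{j+1}²`. So the sum up to `q_K` is
`≍ ∑_{j ≤ K} a_j²`, whereas `log q_K ≍ K`. Taking `a_j = 1000` on the ranges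
`(ρ^(2k+1), ρ^(2k+2)]` and `a_j = 1` on `(ρ^(2k), ρ^(2k+1)]` with `ρ = 10⁶`, the normalised sum
is at most `1024` at `M = q_{ρ^(2k+1)} - 1` and at least `62500` at `M = q_{ρ^(2k+2)}`.
-/

open scoped Real
open Filter

open Finset

theorem abs_sub_lt_of_floor_eq {x y δ : ℝ} (hδ : 0 < δ) (hfloor : ⌊|x| / δ⌋₊ = ⌊|y| / δ⌋₊)
    (hsign : 0 ≤ x ↔ 0 ≤ y) : |x - y| < δ := by
  have hclose : |(|x| - |y|)| < δ := by
    have := Nat.floor_le (div_nonneg (abs_nonneg x) hδ.le); have := Nat.lt_floor_add_one (|x| / δ)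
    have := Nat.floor_le (div_nonneg (abs_nonneg y) hδ.le); have := Nat.lt_floor_add_one (|y| / δ)
    rw [abs_sub_lt_iff, ← div_lt_one hδ, ← div_lt_one hδ, sub_div, sub_div]
    rw [hfloor] at *
    constructor <;> linarith
  rcases le_or_gt 0 x with hx | hx
  · rwa [abs_of_nonneg hx, abs_of_nonneg (hsign.mp hx)] at hclose
  · rwa [abs_of_neg hx, abs_of_neg (not_le.mp (mt hsign.mpr (not_le.mpr hx))), neg_sub_neg,
      abs_sub_comm] at hclose

/-- The pair `(⌊|x i| / δ⌋₊, sign of x i)` determines `i`, and `|x i| ≥ ⌊|x i| / δ⌋₊ δ`. -/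
theorem sum_one_div_sq_le_of_separated {ι : Type*} (s : Finset ι) (x : ι → ℝ) {δ : ℝ}
    (hδ : 0 < δ) (hx : ∀ i ∈ s, δ ≤ |x i|)
    (hsep : ∀ i ∈ s, ∀ j ∈ s, i ≠ j → δ ≤ |x i - x j|) :
    ∑ i ∈ s, 1 / x i ^ 2 ≤ 4 / δ ^ 2 := by
  classical
  set F : ι → ℕ × Bool := fun i => (⌊|x i| / δ⌋₊, decide (0 ≤ x i)) with hF
  set g : ℕ × Bool → ℝ := fun p => ((p.1 : ℝ) ^ 2)⁻¹ / δ ^ 2 with hg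
  have hF_inj : Set.InjOn F s := fun i hi j hj hij => by
    by_contra hne
    have hsign : (0 ≤ x i ↔ 0 ≤ x j) := by simpa [hF] using congrArg Prod.snd hij
    linarith [hsep i hi j hj hne, abs_sub_lt_of_floor_eq hδ (congrArg Prod.fst hij) hsign]
  have hF_pos : ∀ i ∈ s, 1 ≤ (F i).1 := fun i hi =>
    Nat.le_floor (by rw [Nat.cast_one, le_div_iff₀ hδ, one_mul]; exact hx i hi)
  have hterm : ∀ i ∈ s, 1 / x i ^ 2 ≤ g (F i) := by
    intro i hi
    have hn : ((F i).1 : ℝ) * δ ≤ |x i| :=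
      (le_div_iff₀ hδ).mp (Nat.floor_le (div_nonneg (abs_nonneg _) hδ.le))
    have hn0 : (0 : ℝ) < (F i).1 := by exact_mod_cast hF_pos i hi
    calc 1 / x i ^ 2 = 1 / |x i| ^ 2 := by rw [sq_abs]
      _ ≤ 1 / (((F i).1 : ℝ) * δ) ^ 2 := by gcongr
      _ = g (F i) := by rw [hg, mul_pow, one_div, mul_inv, ← div_eq_mul_inv]
  set N := s.sup (fun i => (F i).1) + 1
  have himage : s.image F ⊆ Ioo 0 N ×ˢ univ := by
    intro p hp
    obtain ⟨i, hi, rfl⟩ := mem_image.mp hp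
    simp only [mem_product, mem_Ioo, mem_univ, and_true]
    exact ⟨hF_pos i hi, Nat.lt_succ_of_le (le_sup (f := fun i => (F i).1) hi)⟩
  calc ∑ i ∈ s, 1 / x i ^ 2 ≤ ∑ i ∈ s, g (F i) := sum_le_sum hterm
    _ = ∑ p ∈ s.image F, g p := (sum_image hF_inj).symm
    _ ≤ ∑ p ∈ Ioo 0 N ×ˢ univ, g p :=
        sum_le_sum_of_subset_of_nonneg himage fun p _ _ => by positivity
    _ = 2 * (∑ n ∈ Ioo 0 N, ((n : ℝ) ^ 2)⁻¹) / δ ^ 2 := by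
        rw [sum_product, mul_sum, sum_div]
        simp [hg, two_mul, add_div]
    _ ≤ 2 * (2 / (0 + 1)) / δ ^ 2 := by gcongr; simpa using sum_Ioo_inv_sq_le (α := ℝ) 0 N
    _ = 4 / δ ^ 2 := by norm_num

theorem ne_zero_and_mul_nonpos_of_lt {x y Q Q' : ℤ} (hQ : 1 ≤ Q) (h0 : 0 < x * Q + y * Q')
    (h1 : x * Q + y * Q' < Q') : x ≠ 0 ∧ x * y ≤ 0 := by
  refine ⟨fun hx => ?_, ?_⟩
  · rw [hx, zero_mul, zero_add] at h0 h1
    rcases le_or_gt y 0 with hy | hy <;> nlinarith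
  · by_contra! hxy
    rcases pos_and_pos_or_neg_and_neg_of_mul_pos hxy with ⟨hx, hy⟩ | ⟨hx, hy⟩ <;> nlinarith

/-- `cfDen a n` and `cfNum a n` are the denominator `q n` and numerator `p n` of the `n`-th
convergent of `[0; a 1, a 2, …]`; the value `a 0` plays no role. -/
def cfDen (a : ℕ → ℕ) : ℕ → ℕ
  | 0 => 1
  | 1 => a 1
  | n + 2 => a (n + 2) * cfDen a (n + 1) + cfDen a n

def cfNum (a : ℕ → ℕ) : ℕ → ℕ
  | 0 => 0
  | 1 => 1
  | n + 2 => a (n + 2) * cfNum a (n + 1) + cfNum a n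

section Continuants

variable {a : ℕ → ℕ}

theorem cfDen_add_two (a : ℕ → ℕ) (n : ℕ) :
    cfDen a (n + 2) = a (n + 2) * cfDen a (n + 1) + cfDen a n := rfl

theorem cfNum_add_two (a : ℕ → ℕ) (n : ℕ) :
    cfNum a (n + 2) = a (n + 2) * cfNum a (n + 1) + cfNum a n := rfl

theorem one_le_cfDen (ha : ∀ j, 1 ≤ a j) : ∀ n, 1 ≤ cfDen a n
  | 0 => le_rfl
  | 1 => ha 1
  | n + 2 => (one_le_cfDen ha n).trans (Nat.le_add_left _ _)

theorem cfDen_le_succ (ha : ∀ j, 1 ≤ a j) : ∀ n, cfDen a n ≤ cfDen a (n + 1)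
  | 0 => ha 1
  | n + 1 => by
    rw [cfDen_add_two]
    nlinarith [ha (n + 2)]

theorem cfDen_mono (ha : ∀ j, 1 ≤ a j) : Monotone (cfDen a) :=
  monotone_nat_of_le_succ (cfDen_le_succ ha)

theorem cfDen_lt_succ (ha : ∀ j, 1 ≤ a j) {n : ℕ} (hn : 1 ≤ n) : cfDen a n < cfDen a (n + 1) := by
  obtain ⟨n, rfl⟩ := Nat.exists_eq_add_of_le' hn
  rw [cfDen_add_two]
  nlinarith [ha (n + 2), one_le_cfDen ha n]

theorem cfDen_lt (ha : ∀ j, 1 ≤ a j) {m n : ℕ} (hm : 1 ≤ m) (hmn : m < n) :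
    cfDen a m < cfDen a n :=
  (cfDen_lt_succ ha hm).trans_le (cfDen_mono ha hmn)

theorem le_cfDen (ha : ∀ j, 1 ≤ a j) : ∀ n, n ≤ cfDen a n
  | 0 => Nat.zero_le _
  | 1 => ha 1
  | n + 2 => by
    rw [cfDen_add_two]
    nlinarith [ha (n + 2), le_cfDen ha (n + 1), one_le_cfDen ha n]

theorem tendsto_cfDen_atTop (ha : ∀ j, 1 ≤ a j) : Tendsto (cfDen a) atTop atTop :=
  tendsto_atTop_mono (le_cfDen ha) tendsto_id

theorem exists_cfDen_le_lt (ha : ∀ j, 1 ≤ a j) {q : ℕ} (hq : 1 ≤ q) :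
    ∃ j, cfDen a j ≤ q ∧ q < cfDen a (j + 1) := by
  have hex : ∃ k, q < cfDen a k := ⟨q + 1, q.lt_succ_self.trans_le (le_cfDen ha _)⟩
  obtain ⟨j, hj⟩ : ∃ j, Nat.find hex = j + 1 :=
    Nat.exists_eq_add_one.mpr (Nat.pos_of_ne_zero fun h0 => by
      have := Nat.find_spec hex; rw [h0] at this; exact absurd this (by simp [cfDen]; omega))
  exact ⟨j, not_lt.mp (Nat.find_min hex (by omega)), hj ▸ Nat.find_spec hex⟩

theorem two_pow_half_le_cfDen (ha : ∀ j, 1 ≤ a j) : ∀ n, 2 ^ (n / 2) ≤ cfDen a n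
  | 0 => le_rfl
  | 1 => ha 1
  | n + 2 => by
    rw [cfDen_add_two, Nat.add_div_right n two_pos, pow_succ]
    nlinarith [ha (n + 2), cfDen_le_succ ha n, two_pow_half_le_cfDen ha n]

theorem mul_cfDen_le_cfDen_succ (a : ℕ → ℕ) : ∀ n, a (n + 1) * cfDen a n ≤ cfDen a (n + 1)
  | 0 => by simp [cfDen]
  | n + 1 => by rw [cfDen_add_two]; exact Nat.le_add_right _ _

theorem cfDen_succ_le (ha : ∀ j, 1 ≤ a j) : ∀ n, cfDen a (n + 1) ≤ 2 * a (n + 1) * cfDen a n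
  | 0 => by simp [cfDen]; omega
  | n + 1 => by
    rw [cfDen_add_two]
    nlinarith [ha (n + 2), cfDen_le_succ ha n]

theorem cfDen_le_pow {A : ℕ} (ha : ∀ j, 1 ≤ a j) (hA : ∀ j, a j ≤ A) :
    ∀ n, cfDen a n ≤ (2 * A) ^ n
  | 0 => le_rfl
  | n + 1 => by
    rw [pow_succ]
    nlinarith [cfDen_succ_le ha n, hA (n + 1), cfDen_le_pow ha hA n]

theorem cfDen_mul_cfNum_succ_sub (a : ℕ → ℕ) :
    ∀ n, (cfDen a n : ℤ) * cfNum a (n + 1) - cfNum a n * cfDen a (n + 1) = (-1) ^ n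
  | 0 => by simp [cfDen, cfNum]
  | n + 1 => by
    have ih := cfDen_mul_cfNum_succ_sub a n
    rw [cfDen_add_two, cfNum_add_two]
    push_cast
    linear_combination (-1 : ℤ) * ih

end Continuants

noncomputable def cfGap (a : ℕ → ℕ) (k : ℕ) : ℝ := 1 / ((cfDen a k : ℝ) * cfDen a (k + 1))

noncomputable def cfValue (a : ℕ → ℕ) : ℝ := ∑' k, (-1) ^ k * cfGap a k

noncomputable def cfTail (a : ℕ → ℕ) (j : ℕ) : ℝ := ∑' i, (-1) ^ i * cfGap a (i + j)

section Convergents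

variable {a : ℕ → ℕ}

theorem cfDen_pos (ha : ∀ j, 1 ≤ a j) (n : ℕ) : (0 : ℝ) < cfDen a n := by
  exact_mod_cast one_le_cfDen ha n

theorem cfGap_pos (ha : ∀ j, 1 ≤ a j) (k : ℕ) : 0 < cfGap a k := by
  have := cfDen_pos ha k; have := cfDen_pos ha (k + 1)
  unfold cfGap; positivity

theorem cfGap_antitone (ha : ∀ j, 1 ≤ a j) : Antitone (cfGap a) := by
  refine antitone_nat_of_succ_le fun k => one_div_le_one_div_of_le ?_ ?_
  · exact mul_pos (cfDen_pos ha k) (cfDen_pos ha (k + 1))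
  · have h1 : (cfDen a k : ℝ) ≤ cfDen a (k + 1) := by exact_mod_cast cfDen_le_succ ha k
    have h2 : (cfDen a (k + 1) : ℝ) ≤ cfDen a (k + 2) := by exact_mod_cast cfDen_le_succ ha (k + 1)
    exact mul_le_mul h1 h2 (cfDen_pos ha _).le (cfDen_pos ha _).le

theorem cfGap_le (ha : ∀ j, 1 ≤ a j) (k : ℕ) : cfGap a k ≤ 2 * (1 / 2) ^ k := by
  have hq : (2 : ℝ) ^ (k / 2) ≤ cfDen a k := by exact_mod_cast two_pow_half_le_cfDen ha k
  have hq' : (2 : ℝ) ^ (k / 2) ≤ cfDen a (k + 1) :=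
    hq.trans (by exact_mod_cast cfDen_le_succ ha k)
  have hpow : (2 : ℝ) ^ k ≤ 2 * (2 ^ (k / 2) * 2 ^ (k / 2)) := by
    rw [← pow_add, ← pow_succ']
    exact pow_le_pow_right₀ one_le_two (by omega)
  rw [cfGap, one_div_pow, ← div_eq_mul_one_div, div_le_div_iff₀
    (mul_pos (cfDen_pos ha k) (cfDen_pos ha (k + 1))) (by positivity)]
  nlinarith [mul_le_mul hq hq' (by positivity) (cfDen_pos ha k).le]

theorem summable_cfGap (ha : ∀ j, 1 ≤ a j) : Summable (cfGap a) :=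
  Summable.of_nonneg_of_le (fun k => (cfGap_pos ha k).le) (cfGap_le ha)
    (summable_geometric_two.mul_left 2)

theorem sum_range_cfGap (ha : ∀ j, 1 ≤ a j) :
    ∀ n, ∑ k ∈ range n, (-1) ^ k * cfGap a k = (cfNum a n : ℝ) / cfDen a n
  | 0 => by simp [cfNum]
  | n + 1 => by
    have hdet : ((cfDen a n : ℤ) * cfNum a (n + 1) - cfNum a n * cfDen a (n + 1) : ℝ) =
        (-1) ^ n := by
      exact_mod_cast cfDen_mul_cfNum_succ_sub a n
    have := cfDen_pos ha n; have := cfDen_pos ha (n + 1)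
    rw [sum_range_succ, sum_range_cfGap ha n, cfGap]
    field_simp
    push_cast at hdet
    linear_combination (-1 : ℝ) * hdet

theorem cfValue_eq (ha : ∀ j, 1 ≤ a j) (j : ℕ) :
    cfValue a = cfNum a j / cfDen a j + (-1) ^ j * cfTail a j := by
  rw [cfValue, ← (summable_cfGap ha).alternating.sum_add_tsum_nat_add j, sum_range_cfGap ha,
    cfTail, ← tsum_mul_left]
  congr 2 with i
  ring

theorem cfTail_le (ha : ∀ j, 1 ≤ a j) (j : ℕ) : cfTail a j ≤ cfGap a j := by
  have hlim := ((summable_nat_add_iff j).mpr (summable_cfGap ha)).tendsto_alternating_series_tsum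
  have hanti : Antitone fun i => cfGap a (i + j) := fun _ _ h => cfGap_antitone ha (by omega)
  simpa [cfTail] using hanti.tendsto_le_alternating_series hlim 0

theorem cfGap_sub_le_cfTail (ha : ∀ j, 1 ≤ a j) (j : ℕ) :
    cfGap a j - cfGap a (j + 1) ≤ cfTail a j := by
  have hlim := ((summable_nat_add_iff j).mpr (summable_cfGap ha)).tendsto_alternating_series_tsum
  have hanti : Antitone fun i => cfGap a (i + j) := fun _ _ h => cfGap_antitone ha (by omega)
  have := hanti.alternating_series_le_tendsto hlim 1
  simp only [mul_one, sum_range_succ, sum_range_zero, pow_zero, pow_one, zero_add] at this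
  rw [cfTail, Nat.add_comm j 1]
  linarith

end Convergents

/-- `cfErr a j = |q_j α - p_j|` for `α = cfValue a` (see `cfDen_mul_cfValue_sub`). -/
noncomputable def cfErr (a : ℕ → ℕ) (j : ℕ) : ℝ := cfDen a j * cfTail a j

theorem exists_mul_cfDen_add_mul_cfDen_eq (a : ℕ → ℕ) (j : ℕ) (m n : ℤ) :
    ∃ x y : ℤ, x * cfDen a j + y * cfDen a (j + 1) = m ∧
      x * cfNum a j + y * cfNum a (j + 1) = n := by
  have hdet := cfDen_mul_cfNum_succ_sub a j
  have hsq : ((-1 : ℤ) ^ j) ^ 2 = 1 := by rw [← pow_mul, mul_comm, pow_mul]; norm_num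
  refine ⟨(-1) ^ j * (m * cfNum a (j + 1) - n * cfDen a (j + 1)),
    (-1) ^ j * (n * cfDen a j - m * cfNum a j), ?_, ?_⟩
  · linear_combination (m * (-1) ^ j : ℤ) * hdet + m * hsq
  · linear_combination (n * (-1) ^ j : ℤ) * hdet + n * hsq

section BestApproximation

variable {a : ℕ → ℕ}

theorem cfDen_mul_cfValue_sub (ha : ∀ j, 1 ≤ a j) (j : ℕ) :
    (cfDen a j : ℝ) * cfValue a - cfNum a j = (-1) ^ j * cfErr a j := by
  have := cfDen_pos ha j
  rw [cfValue_eq ha j, cfErr]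
  field_simp
  ring

theorem cfErr_le (ha : ∀ j, 1 ≤ a j) (j : ℕ) : cfErr a j ≤ 1 / cfDen a (j + 1) := by
  have := cfDen_pos ha j
  calc cfErr a j ≤ cfDen a j * cfGap a j := by
        rw [cfErr]; gcongr; exact cfTail_le ha j
    _ = 1 / cfDen a (j + 1) := by rw [cfGap]; field_simp

/-- Here `q_j (cfGap j - cfGap (j+1)) = a_{j+2} / q_{j+2}` and `q_{j+2} ≤ 2 a_{j+2} q_{j+1}`. -/
theorem one_div_two_mul_le_cfErr (ha : ∀ j, 1 ≤ a j) (j : ℕ) :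
    1 / (2 * cfDen a (j + 1)) ≤ cfErr a j := by
  have h0 := cfDen_pos ha j; have h1 := cfDen_pos ha (j + 1); have h2 := cfDen_pos ha (j + 2)
  have hrec : (cfDen a (j + 2) : ℝ) = a (j + 2) * cfDen a (j + 1) + cfDen a j := by
    exact_mod_cast cfDen_add_two a j
  have hle : (cfDen a (j + 2) : ℝ) ≤ 2 * a (j + 2) * cfDen a (j + 1) := by
    exact_mod_cast cfDen_succ_le ha (j + 1)
  calc 1 / (2 * cfDen a (j + 1)) ≤ (a (j + 2) : ℝ) / cfDen a (j + 2) := by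
        rw [div_le_div_iff₀ (by positivity) h2]; linarith
    _ = cfDen a j * (cfGap a j - cfGap a (j + 1)) := by
        rw [cfGap, cfGap, hrec]; field_simp; ring
    _ ≤ cfErr a j := by rw [cfErr]; gcongr; exact cfGap_sub_le_cfTail ha j

theorem one_div_four_mul_le_cfDen_mul_cfErr (ha : ∀ j, 1 ≤ a j) (j : ℕ) :
    1 / (4 * a (j + 1)) ≤ (cfDen a j : ℝ) * cfErr a j := by
  have hsucc : (cfDen a (j + 1) : ℝ) ≤ 2 * a (j + 1) * cfDen a j := by
    exact_mod_cast cfDen_succ_le ha j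
  have ha1 : (1 : ℝ) ≤ a (j + 1) := by exact_mod_cast ha (j + 1)
  have hq1 := cfDen_pos ha (j + 1)
  have herr := one_div_two_mul_le_cfErr ha j
  rw [div_le_iff₀ (by positivity)] at herr ⊢
  nlinarith

theorem cfErr_pos (ha : ∀ j, 1 ≤ a j) (j : ℕ) : 0 < cfErr a j :=
  (by have := cfDen_pos ha (j + 1); positivity : (0 : ℝ) < 1 / (2 * cfDen a (j + 1))).trans_le
    (one_div_two_mul_le_cfErr ha j)

/-- Writing `m = x q_j + y q_{j+1}` and `n = x p_j + y p_{j+1}` (the matrix of convergents is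
unimodular), `0 < m < q_{j+1}` forces `x ≠ 0` and `x y ≤ 0`, while `q_j α - p_j` and
`q_{j+1} α - p_{j+1}` have opposite signs, so `|m α - n| = |x| cfErr j + |y| cfErr (j+1)`. -/
theorem cfErr_le_abs_mul_sub (ha : ∀ j, 1 ≤ a j) (j : ℕ) {m : ℕ} (n : ℤ) (hm0 : 0 < m)
    (hm : m < cfDen a (j + 1)) : cfErr a j ≤ |m * cfValue a - n| := by
  obtain ⟨x, y, hxm, hxn⟩ := exists_mul_cfDen_add_mul_cfDen_eq a j m n
  have hq : (1 : ℤ) ≤ cfDen a j := by exact_mod_cast one_le_cfDen ha j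
  obtain ⟨hx, hxy⟩ := ne_zero_and_mul_nonpos_of_lt hq (by rw [hxm]; exact_mod_cast hm0)
    (by rw [hxm]; exact_mod_cast hm)
  have hsplit : (m : ℝ) * cfValue a - n = (-1) ^ j * (x * cfErr a j - y * cfErr a (j + 1)) := by
    have hxmR : (x : ℝ) * cfDen a j + y * cfDen a (j + 1) = m := by exact_mod_cast hxm
    have hxnR : (x : ℝ) * cfNum a j + y * cfNum a (j + 1) = n := by exact_mod_cast hxn
    rw [← hxmR, ← hxnR]
    linear_combination
      (x : ℝ) * cfDen_mul_cfValue_sub ha j + (y : ℝ) * cfDen_mul_cfValue_sub ha (j + 1)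
  have he0 := cfErr_pos ha j
  have he1 := cfErr_pos ha (j + 1)
  rw [hsplit, abs_mul, abs_pow, abs_neg, abs_one, one_pow, one_mul]
  rcases lt_or_gt_of_ne hx with hx' | hx'
  · have hy : (0 : ℝ) ≤ y := by exact_mod_cast nonneg_of_mul_nonpos_right hxy hx'
    have hx1 : (x : ℝ) ≤ -1 := by exact_mod_cast Int.le_sub_one_of_lt hx'
    rw [abs_of_neg (by nlinarith)]
    nlinarith
  · have hy : (y : ℝ) ≤ 0 := by exact_mod_cast nonpos_of_mul_nonpos_right hxy hx'
    have hx1 : (1 : ℝ) ≤ x := by exact_mod_cast hx'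
    rw [abs_of_pos (by nlinarith)]
    nlinarith

theorem cfErr_le_nd (ha : ∀ j, 1 ≤ a j) (j : ℕ) {m : ℕ} (hm0 : 0 < m)
    (hm : m < cfDen a (j + 1)) : cfErr a j ≤ nd (m * cfValue a) :=
  cfErr_le_abs_mul_sub ha j _ hm0 hm

theorem cfErr_le_abs_sub_of_lt (ha : ∀ j, 1 ≤ a j) (j : ℕ) {m m' : ℕ} (k k' : ℤ) (h : m' < m)
    (hm : m < cfDen a (j + 1)) : cfErr a j ≤ |(m * cfValue a - k) - (m' * cfValue a - k')| := by
  have hdiff : (m * cfValue a - k) - (m' * cfValue a - k') =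
      ((m - m' : ℕ) : ℝ) * cfValue a - ((k - k' : ℤ) : ℝ) := by
    rw [Nat.cast_sub h.le]; push_cast; ring
  rw [hdiff]
  exact cfErr_le_abs_mul_sub ha j _ (Nat.sub_pos_of_lt h) ((Nat.sub_le m m').trans_lt hm)

theorem nd_cfDen_mul_le (ha : ∀ j, 1 ≤ a j) (j : ℕ) : nd (cfDen a j * cfValue a) ≤ cfErr a j := by
  have hpos := (cfErr_pos ha j).le
  calc nd (cfDen a j * cfValue a) ≤ |cfDen a j * cfValue a - (cfNum a j : ℤ)| := round_le _ _
    _ = cfErr a j := by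
        rw [Int.cast_natCast, cfDen_mul_cfValue_sub ha, abs_mul, abs_pow, abs_neg, abs_one, one_pow,
          one_mul, abs_of_nonneg hpos]

theorem badlyApprox_cfValue {A : ℕ} (ha : ∀ j, 1 ≤ a j) (hA : ∀ j, a j ≤ A) :
    BadlyApprox (cfValue a) := by
  have hA1 : (1 : ℝ) ≤ A := by exact_mod_cast (ha 0).trans (hA 0)
  refine ⟨1 / (4 * A), by positivity, fun q hq => ?_⟩
  obtain ⟨j, hjq, hqj⟩ := exists_cfDen_le_lt ha hq
  have hq0 := cfDen_pos ha j
  have ha1 : (1 : ℝ) ≤ a (j + 1) := by exact_mod_cast ha (j + 1)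
  have hAj : (a (j + 1) : ℝ) ≤ A := by exact_mod_cast hA (j + 1)
  have hjq' : (cfDen a j : ℝ) ≤ q := by exact_mod_cast hjq
  calc 1 / (4 * A) / q ≤ 1 / (4 * a (j + 1)) / (cfDen a j : ℝ) := by gcongr
    _ ≤ cfErr a j := by
        rw [div_le_iff₀ hq0, mul_comm (cfErr a j)]; exact one_div_four_mul_le_cfDen_mul_cfErr ha j
    _ ≤ nd (q * cfValue a) := cfErr_le_nd ha j hq hqj

end BestApproximation

noncomputable def invSqDist (α : ℝ) (m : ℕ) : ℝ := 1 / ((m : ℝ) ^ 2 * nd (m * α) ^ 2)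

section Sums

variable {a : ℕ → ℕ}

/-- On `[q_j, q_{j+1})` the signed distances `m α - round (m α)` are `cfErr j`-separated and
at least `cfErr j` in size, by best approximation applied to `m` and to differences `m - m'`. -/
theorem sum_Ico_cfDen_invSqDist_le (ha : ∀ j, 1 ≤ a j) (j : ℕ) :
    ∑ m ∈ Ico (cfDen a j) (cfDen a (j + 1)), invSqDist (cfValue a) m ≤
      64 * (a (j + 1) : ℝ) ^ 2 := by
  set α := cfValue a
  set δ := cfErr a j
  set r : ℕ → ℝ := fun m => m * α - round (m * α)
  have hδ := cfErr_pos ha j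
  have hq := cfDen_pos ha j
  have hmem : ∀ m ∈ Ico (cfDen a j) (cfDen a (j + 1)), 0 < m ∧ m < cfDen a (j + 1) := fun m hm =>
    ⟨(one_le_cfDen ha j).trans (mem_Ico.mp hm).1, (mem_Ico.mp hm).2⟩
  have hterm : ∀ m ∈ Ico (cfDen a j) (cfDen a (j + 1)),
      invSqDist α m ≤ 1 / (cfDen a j : ℝ) ^ 2 * (1 / r m ^ 2) := by
    intro m hm
    have hrm : 0 < |r m| := hδ.trans_le (cfErr_le_nd ha j (hmem m hm).1 (hmem m hm).2)
    have hqm : (cfDen a j : ℝ) ≤ m := by exact_mod_cast (mem_Ico.mp hm).1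
    have hr2 : 0 < r m ^ 2 := by rw [← sq_abs]; positivity
    rw [invSqDist, show nd (m * α) ^ 2 = r m ^ 2 from sq_abs (r m), one_div_mul_one_div]
    gcongr
  have hqδ := one_div_four_mul_le_cfDen_mul_cfErr ha j
  calc ∑ m ∈ Ico (cfDen a j) (cfDen a (j + 1)), invSqDist α m
      ≤ ∑ m ∈ Ico (cfDen a j) (cfDen a (j + 1)), 1 / (cfDen a j : ℝ) ^ 2 * (1 / r m ^ 2) :=
        sum_le_sum hterm
    _ ≤ 1 / (cfDen a j : ℝ) ^ 2 * (4 / δ ^ 2) := by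
        rw [← mul_sum]
        gcongr
        refine sum_one_div_sq_le_of_separated _ r hδ
          (fun m hm => cfErr_le_nd ha j (hmem m hm).1 (hmem m hm).2) fun m hm m' hm' hne => ?_
        rcases lt_or_gt_of_ne hne with h | h
        · rw [abs_sub_comm]; exact cfErr_le_abs_sub_of_lt ha j _ _ h (hmem m' hm').2
        · exact cfErr_le_abs_sub_of_lt ha j _ _ h (hmem m hm).2
    _ = 4 / ((cfDen a j : ℝ) * δ) ^ 2 := by field_simp
    _ ≤ 4 / (1 / (4 * a (j + 1))) ^ 2 := by
        have : (0 : ℝ) < a (j + 1) := by exact_mod_cast ha (j + 1)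
        gcongr
    _ = 64 * (a (j + 1) : ℝ) ^ 2 := by field_simp; ring

theorem sum_Ico_one_cfDen_invSqDist_le (ha : ∀ j, 1 ≤ a j) :
    ∀ K, ∑ m ∈ Ico 1 (cfDen a K), invSqDist (cfValue a) m ≤
      64 * ∑ j ∈ range K, (a (j + 1) : ℝ) ^ 2
  | 0 => by simp [cfDen]
  | K + 1 => by
    rw [← sum_Ico_consecutive _ (one_le_cfDen ha K) (cfDen_le_succ ha K), sum_range_succ, mul_add]
    exact add_le_add (sum_Ico_one_cfDen_invSqDist_le ha K) (sum_Ico_cfDen_invSqDist_le ha K)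

theorem sq_le_invSqDist_cfDen (ha : ∀ j, 1 ≤ a j) {j : ℕ} (hj : 1 ≤ j) :
    (a (j + 1) : ℝ) ^ 2 ≤ invSqDist (cfValue a) (cfDen a j) := by
  have hq := cfDen_pos ha j
  have hq1 := cfDen_pos ha (j + 1)
  have hnd_pos : 0 < nd (cfDen a j * cfValue a) :=
    (cfErr_pos ha j).trans_le (cfErr_le_nd ha j (one_le_cfDen ha j) (cfDen_lt_succ ha hj))
  have hnd_le : nd (cfDen a j * cfValue a) ≤ 1 / cfDen a (j + 1) :=
    (nd_cfDen_mul_le ha j).trans (cfErr_le ha j)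
  have hmul : (a (j + 1) : ℝ) * cfDen a j ≤ cfDen a (j + 1) := by
    exact_mod_cast mul_cfDen_le_cfDen_succ a j
  have hkey : (a (j + 1) : ℝ) * (cfDen a j * nd (cfDen a j * cfValue a)) ≤ 1 := by
    rw [le_div_iff₀ hq1] at hnd_le
    nlinarith
  rw [invSqDist, ← mul_pow, le_div_iff₀ (by positivity), ← mul_pow]
  exact pow_le_one₀ (by positivity) hkey

theorem sum_Icc_sq_le_sum_Icc_cfDen_invSqDist (ha : ∀ j, 1 ≤ a j) (K : ℕ) :
    ∑ j ∈ Icc 1 K, (a (j + 1) : ℝ) ^ 2 ≤ ∑ m ∈ Icc 1 (cfDen a K), invSqDist (cfValue a) m := by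
  have hinj : Set.InjOn (cfDen a) (Icc 1 K) := by
    intro x hx y hy hxy
    rw [coe_Icc, Set.mem_Icc] at hx hy
    by_contra hne
    rcases lt_or_gt_of_ne hne with h | h
    · exact (cfDen_lt ha hx.1 h).ne hxy
    · exact (cfDen_lt ha hy.1 h).ne' hxy
  calc ∑ j ∈ Icc 1 K, (a (j + 1) : ℝ) ^ 2
      ≤ ∑ j ∈ Icc 1 K, invSqDist (cfValue a) (cfDen a j) :=
        sum_le_sum fun j hj => sq_le_invSqDist_cfDen ha (mem_Icc.mp hj).1
    _ = ∑ m ∈ (Icc 1 K).image (cfDen a), invSqDist (cfValue a) m := (sum_image hinj).symm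
    _ ≤ ∑ m ∈ Icc 1 (cfDen a K), invSqDist (cfValue a) m := by
        refine sum_le_sum_of_subset_of_nonneg ?_ fun m _ _ => by unfold invSqDist; positivity
        intro m hm
        obtain ⟨j, hj, rfl⟩ := mem_image.mp hm
        exact mem_Icc.mpr ⟨one_le_cfDen ha j, cfDen_mono ha (mem_Icc.mp hj).2⟩

end Sums

section Logarithms

variable {a : ℕ → ℕ}

theorem log_cfDen_le {A : ℕ} (ha : ∀ j, 1 ≤ a j) (hA : ∀ j, a j ≤ A) (n : ℕ) :
    Real.log (cfDen a n) ≤ n * Real.log (2 * A) := by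
  have hA1 : (1 : ℝ) ≤ A := by exact_mod_cast (ha 0).trans (hA 0)
  rw [← Real.log_pow]
  exact Real.log_le_log (cfDen_pos ha n) (by exact_mod_cast cfDen_le_pow ha hA n)

theorem div_eight_le_log_cfDen_sub_one (ha : ∀ j, 1 ≤ a j) {n : ℕ} (hn : 4 ≤ n) :
    (n : ℝ) / 8 ≤ Real.log ((cfDen a n - 1 : ℕ) : ℝ) := by
  have hq : 2 ^ ((n - 1) / 2) ≤ cfDen a n - 1 := by
    have hlt := cfDen_lt_succ ha (n := n - 1) (by omega)
    rw [Nat.sub_add_cancel (by omega)] at hlt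
    have := two_pow_half_le_cfDen ha (n - 1)
    omega
  have hlog : (((n - 1) / 2 : ℕ) : ℝ) * Real.log 2 ≤ Real.log ((cfDen a n - 1 : ℕ) : ℝ) := by
    rw [← Real.log_pow]
    exact Real.log_le_log (by positivity) (by exact_mod_cast hq)
  have hhalf : (n : ℝ) - 2 ≤ 2 * ((n - 1) / 2 : ℕ) := by
    have h : ((n - 2 : ℕ) : ℝ) ≤ (2 * ((n - 1) / 2) : ℕ) := by exact_mod_cast (by omega)
    push_cast [Nat.cast_sub (by omega : 2 ≤ n)] at h
    linarith
  have hn' : (4 : ℝ) ≤ n := by exact_mod_cast hn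
  nlinarith [Real.log_two_gt_d9]

end Logarithms

local notation "ρ" => (10 ^ 6 : ℕ)

/-- The partial quotients of the theorem: `blockSeq j = 1000` when
`ρ ^ (2k+1) < j ≤ ρ ^ (2k+2)` and `blockSeq j = 1` when `ρ ^ (2k) < j ≤ ρ ^ (2k+1)`. -/
def blockSeq (j : ℕ) : ℕ := if Odd (Nat.log ρ (j - 1)) then 1000 else 1

theorem one_le_blockSeq (j : ℕ) : 1 ≤ blockSeq j := by unfold blockSeq; split <;> norm_num

theorem blockSeq_le (j : ℕ) : blockSeq j ≤ 1000 := by unfold blockSeq; split <;> norm_num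

theorem blockSeq_succ_of_log_eq {j k : ℕ} (hj : Nat.log ρ j = k) :
    blockSeq (j + 1) = if Odd k then 1000 else 1 := by
  rw [blockSeq, Nat.add_sub_cancel, hj]

/-- Up to `ρ ^ (2i+1)` the large quotients live below `ρ ^ (2i)`, a `1/ρ` fraction. -/
theorem sum_range_blockSeq_sq_le (i : ℕ) :
    ∑ j ∈ range (ρ ^ (2 * i + 1)), blockSeq (j + 1) ^ 2 ≤ 2 * ρ ^ (2 * i + 1) := by
  have hle : ρ ^ (2 * i) ≤ ρ ^ (2 * i + 1) := Nat.pow_le_pow_right (by norm_num) (by omega)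
  have hlow : ∑ j ∈ range (ρ ^ (2 * i)), blockSeq (j + 1) ^ 2 ≤ ρ ^ (2 * i + 1) := by
    calc ∑ j ∈ range (ρ ^ (2 * i)), blockSeq (j + 1) ^ 2
        ≤ (range (ρ ^ (2 * i))).card • 1000 ^ 2 :=
          sum_le_card_nsmul _ _ _ fun j _ => Nat.pow_le_pow_left (blockSeq_le _) 2
      _ = ρ ^ (2 * i + 1) := by rw [card_range, smul_eq_mul]; ring
  have hhigh : ∑ j ∈ Ico (ρ ^ (2 * i)) (ρ ^ (2 * i + 1)), blockSeq (j + 1) ^ 2 ≤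
      ρ ^ (2 * i + 1) := by
    calc ∑ j ∈ Ico (ρ ^ (2 * i)) (ρ ^ (2 * i + 1)), blockSeq (j + 1) ^ 2
        = ∑ j ∈ Ico (ρ ^ (2 * i)) (ρ ^ (2 * i + 1)), 1 := by
          refine sum_congr rfl fun j hj => ?_
          obtain ⟨hj1, hj2⟩ := mem_Ico.mp hj
          rw [blockSeq_succ_of_log_eq (Nat.log_eq_of_pow_le_of_lt_pow hj1 hj2),
            if_neg (Nat.not_odd_iff_even.mpr (even_two_mul i)), one_pow]
      _ ≤ ρ ^ (2 * i + 1) := by rw [sum_const, Nat.card_Ico, smul_eq_mul, mul_one]; omega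
  rw [← sum_range_add_sum_Ico _ hle]
  omega

theorem le_sum_Icc_blockSeq_sq (i : ℕ) :
    ρ * (ρ ^ (2 * i + 2) - ρ ^ (2 * i + 1)) ≤
      ∑ j ∈ Icc 1 (ρ ^ (2 * i + 2)), blockSeq (j + 1) ^ 2 := by
  have hsub : Ico (ρ ^ (2 * i + 1)) (ρ ^ (2 * i + 2)) ⊆
      Icc 1 (ρ ^ (2 * i + 2)) := fun j hj => by
    obtain ⟨hj1, hj2⟩ := mem_Ico.mp hj
    exact mem_Icc.mpr ⟨(Nat.one_le_pow _ _ (by norm_num)).trans hj1, hj2.le⟩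
  have hval : ∀ j ∈ Ico (ρ ^ (2 * i + 1)) (ρ ^ (2 * i + 2)),
      blockSeq (j + 1) ^ 2 = ρ := fun j hj => by
    obtain ⟨hj1, hj2⟩ := mem_Ico.mp hj
    rw [blockSeq_succ_of_log_eq (Nat.log_eq_of_pow_le_of_lt_pow hj1 hj2),
      if_pos (odd_two_mul_add_one i)]
    norm_num
  calc ρ * (ρ ^ (2 * i + 2) - ρ ^ (2 * i + 1))
      = ∑ j ∈ Ico (ρ ^ (2 * i + 1)) (ρ ^ (2 * i + 2)), blockSeq (j + 1) ^ 2 := by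
        rw [sum_congr rfl hval, sum_const, Nat.card_Ico, smul_eq_mul, mul_comm]
    _ ≤ ∑ j ∈ Icc 1 (ρ ^ (2 * i + 2)), blockSeq (j + 1) ^ 2 :=
        sum_le_sum_of_subset hsub

theorem sum_invSqDist_div_log_le (i : ℕ) :
    (∑ m ∈ Icc 1 (cfDen blockSeq (ρ ^ (2 * i + 1)) - 1), invSqDist (cfValue blockSeq) m) /
      Real.log ((cfDen blockSeq (ρ ^ (2 * i + 1)) - 1 : ℕ) : ℝ) ≤ 1024 := by
  set K := ρ ^ (2 * i + 1)
  have hK : 4 ≤ K := (Nat.le_self_pow (by omega) _).trans' (by norm_num)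
  have hK' : (4 : ℝ) ≤ K := by exact_mod_cast hK
  have hlog := div_eight_le_log_cfDen_sub_one one_le_blockSeq hK
  have hcount : ∑ j ∈ range K, (blockSeq (j + 1) : ℝ) ^ 2 ≤ 2 * K := by
    exact_mod_cast sum_range_blockSeq_sq_le i
  have hsum := sum_Ico_one_cfDen_invSqDist_le one_le_blockSeq K
  rw [← Finset.Ico_add_one_right_eq_Icc, Nat.sub_add_cancel (one_le_cfDen one_le_blockSeq K),
    div_le_iff₀ (by linarith)]
  linarith

theorem le_sum_invSqDist_div_log (i : ℕ) :
    62500 ≤ (∑ m ∈ Icc 1 (cfDen blockSeq (ρ ^ (2 * i + 2))), invSqDist (cfValue blockSeq) m) /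
      Real.log ((cfDen blockSeq (ρ ^ (2 * i + 2)) : ℕ) : ℝ) := by
  have hcount := le_sum_Icc_blockSeq_sq i
  set K := ρ ^ (2 * i + 2)
  have hK : 2 ≤ K := (Nat.le_self_pow (by omega) _).trans' (by norm_num)
  have hsum :
      500000 * (K : ℝ) ≤ ∑ m ∈ Icc 1 (cfDen blockSeq K), invSqDist (cfValue blockSeq) m := by
    have hK' : K = ρ * ρ ^ (2 * i + 1) := by rw [← pow_succ']
    have hhalf : 500000 * K ≤ ∑ j ∈ Icc 1 K, blockSeq (j + 1) ^ 2 := by omega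
    have hhalf' : 500000 * (K : ℝ) ≤ ∑ j ∈ Icc 1 K, (blockSeq (j + 1) : ℝ) ^ 2 := by
      exact_mod_cast hhalf
    linarith [sum_Icc_sq_le_sum_Icc_cfDen_invSqDist one_le_blockSeq K]
  have hlog_pos : 0 < Real.log (cfDen blockSeq K) :=
    Real.log_pos (by exact_mod_cast (hK.trans (le_cfDen one_le_blockSeq K) : 2 ≤ cfDen blockSeq K))
  have hlog : Real.log (cfDen blockSeq K) ≤ 8 * K := by
    have h2000 : Real.log (2 * (1000 : ℕ)) ≤ 8 := by
      have h := Real.log_le_log (by norm_num) (by norm_num : (2 * (1000 : ℕ) : ℝ) ≤ 2 ^ 11)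
      rw [Real.log_pow] at h
      push_cast at h ⊢
      linarith [Real.log_two_lt_d9]
    nlinarith [log_cfDen_le one_le_blockSeq blockSeq_le K, (Nat.cast_nonneg K : (0 : ℝ) ≤ K)]
  rw [le_div_iff₀ hlog_pos]
  linarith

theorem stmt19 :
    ∃ α : ℝ, BadlyApprox α ∧
      ¬ ∃ ℓ : ℝ, Tendsto (fun M : ℕ =>
          (∑ m ∈ Finset.Icc 1 M, 1 / ((m : ℝ) ^ 2 * nd (m * α) ^ 2)) / Real.log M)
        atTop (nhds ℓ) := by
  refine ⟨cfValue blockSeq, badlyApprox_cfValue one_le_blockSeq blockSeq_le, ?_⟩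
  rintro ⟨ℓ, hℓ⟩
  have hidx (c : ℕ) : Tendsto (fun i => cfDen blockSeq (ρ ^ (2 * i + c))) atTop atTop :=
    (tendsto_cfDen_atTop one_le_blockSeq).comp <| tendsto_atTop_mono
      (fun i => show i ≤ _ from (Nat.lt_pow_self (by norm_num)).le.trans' (by omega)) tendsto_id
  have hupper : ℓ ≤ 1024 :=
    le_of_tendsto' (hℓ.comp ((tendsto_sub_atTop_nat 1).comp (hidx 1))) sum_invSqDist_div_log_le
  have hlower : 62500 ≤ ℓ := ge_of_tendsto' (hℓ.comp (hidx 2)) le_sum_invSqDist_div_log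
  linarith
end
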